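/- arXiv:1706.03504 — 10 statements merged into one kernel-verified Lean document; each statement's English description precedes it below -/
import Mathlib

section
/- For every i with 0 ≤ i ≤ n−1, the Lagrange interpolation polynomial f_i = ∏_{j=0, j≠i}^{n−1} (x − α^j)/(α^i − α^j) satisfies f_i = −(α^i x^{n−1} + α^{2i} x^{n−2} + α^{3i} x^{n−3} + … + α^{(n−1)i} x + α^{ni}). -/
/-!
The nodes `α ^ j`, `j < n`, are exactly the roots of `X ^ n - 1`, so dropping the factor
`X - a` (with `a = α ^ i`) leaves the geometric sum `(X ^ n - a ^ n) / (X - a)`. Its value at `a`,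
which is the denominator `∏ (a - α ^ j)`, is `n * a ^ (n - 1) = n * a⁻¹`, and in `𝔽_q` we have
`n = q - 1 = -1`.
-/

open Polynomial Finset

theorem mul_geom_sum₂_eq_sum_Icc {R : Type*} [CommSemiring R] (x y : R) (n : ℕ) :
    y * ∑ k ∈ range n, y ^ k * x ^ (n - 1 - k) = ∑ m ∈ Icc 1 n, y ^ m * x ^ (n - m) := by
  rw [mul_sum, ← Ico_add_one_right_eq_Icc, sum_Ico_eq_sum_range, Nat.add_sub_cancel]
  refine sum_congr rfl fun k _ => ?_
  rw [← mul_assoc, ← pow_succ', Nat.sub_sub, add_comm k 1]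

theorem FiniteField.cast_card_sub_one (K : Type*) [Field K] [Fintype K] :
    ((Fintype.card K - 1 : ℕ) : K) = -1 := by
  rw [Nat.cast_sub Fintype.card_pos, FiniteField.cast_card_eq_zero, Nat.cast_one, zero_sub]

namespace IsPrimitiveRoot

section IsDomain

variable {R : Type*} [CommRing R] [IsDomain R] {ζ : R} {n i : ℕ}

theorem prod_range_X_sub_C_pow (h : IsPrimitiveRoot ζ n) (hn : 0 < n) :
    ∏ j ∈ range n, (X - C (ζ ^ j)) = X ^ n - 1 := by
  simpa using (X_pow_sub_C_eq_prod h hn (one_pow n)).symm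

theorem prod_erase_X_sub_C_pow (h : IsPrimitiveRoot ζ n) (hi : i < n) :
    ∏ j ∈ (range n).erase i, (X - C (ζ ^ j)) =
      ∑ k ∈ range n, C (ζ ^ i) ^ k * X ^ (n - 1 - k) := by
  apply mul_left_cancel₀ (X_sub_C_ne_zero (ζ ^ i))
  rw [mul_prod_erase _ (fun j => X - C (ζ ^ j)) (mem_range.2 hi),
    h.prod_range_X_sub_C_pow (by omega), mul_comm, ← geom_sum₂_comm, geom_sum₂_mul, ← C_pow,
    ← pow_mul, mul_comm i, pow_mul, h.pow_eq_one, one_pow, C_1]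

theorem prod_erase_pow_sub_pow (h : IsPrimitiveRoot ζ n) (hi : i < n) :
    ∏ j ∈ (range n).erase i, (ζ ^ i - ζ ^ j) = n * (ζ ^ i) ^ (n - 1) := by
  have := congrArg (eval (ζ ^ i)) (h.prod_erase_X_sub_C_pow hi)
  simp only [eval_prod, eval_finsetSum, eval_sub, eval_mul, eval_pow, eval_X, eval_C] at this
  rw [this, ← geom_sum₂_self]

end IsDomain

theorem prod_erase_C_inv_mul_X_sub_C_pow {K : Type*} [Field K] {ζ : K} {n i : ℕ}
    (h : IsPrimitiveRoot ζ n) (hi : i < n) :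
    ∏ j ∈ (range n).erase i, (C ((ζ ^ i - ζ ^ j)⁻¹) * (X - C (ζ ^ j))) =
      C ((n : K)⁻¹) * ∑ m ∈ Icc 1 n, C (ζ ^ (m * i)) * X ^ (n - m) := by
  have hinv : ((ζ ^ i) ^ (n - 1))⁻¹ = ζ ^ i := by
    refine inv_eq_of_mul_eq_one_right ?_
    rw [← pow_succ, Nat.sub_add_cancel (by omega), ← pow_mul, mul_comm, pow_mul, h.pow_eq_one,
      one_pow]
  rw [prod_mul_distrib, ← map_prod, prod_inv_distrib, h.prod_erase_pow_sub_pow hi,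
    h.prod_erase_X_sub_C_pow hi, mul_inv, hinv, map_mul, mul_assoc, mul_geom_sum₂_eq_sum_Icc]
  refine congrArg _ (sum_congr rfl fun m _ => ?_)
  rw [← C_pow, ← pow_mul, mul_comm i]

end IsPrimitiveRoot

/-- the Lagrange interpolation polynomial
`f_i = ∏_{j≠i} (x - α^j)/(α^i - α^j)` equals
`-(α^i x^{n-1} + α^{2i} x^{n-2} + … + α^{(n-1)i} x + α^{ni})`. -/
theorem stmt_3 {F : Type*} [Field F] [Fintype F] (α : F)
    (n : ℕ) (hn : n = Fintype.card F - 1) (hα : orderOf α = n)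
    (i : ℕ) (hi : i < n) :
    ∏ j ∈ (Finset.range n).erase i,
        (Polynomial.C ((α ^ i - α ^ j)⁻¹) * (Polynomial.X - Polynomial.C (α ^ j))) =
      -∑ m ∈ Finset.Icc 1 n, Polynomial.C (α ^ (m * i)) * Polynomial.X ^ (n - m) := by
  have hprim : IsPrimitiveRoot α n := hα ▸ IsPrimitiveRoot.orderOf α
  rw [hprim.prod_erase_C_inv_mul_X_sub_C_pow hi, hn, FiniteField.cast_card_sub_one, inv_neg,
    inv_one, map_neg, map_one, neg_one_mul]
end

section
/- Let λ_u be a monic polynomial of minimal degree in Λ. If g ∈ 𝔽_q[x] has deg g < k and (x^n − 1) divides λ_u·(h_u + g), then for every g' ∈ 𝔽_q[x] with deg g' < k, the number of roots of h_u + g lying in 𝔽_q ∖ {0} is greater than or equal to the number of roots of h_u + g' lying in 𝔽_q ∖ {0}. -/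
open Polynomial

/-- if `λ_u` is a monic polynomial of minimal degree in
`Λ = {λ : (x^n - 1) ∣ λ(h_u + g) for some g with deg g < k}` and `g` (with `deg g < k`)
satisfies `(x^n - 1) ∣ λ_u (h_u + g)`, then `h_u + g` has at least as many roots in
`F \ {0}` as `h_u + g'` for any `g'` with `deg g' < k`. -/
theorem stmt_8 {F : Type*} [Field F] [Fintype F] [DecidableEq F] (α : F)
    (n k : ℕ) (hn : n = Fintype.card F - 1) (hα : orderOf α = n)
    (hk1 : 1 ≤ k) (hkn : k ≤ n)
    (u : Fin n → F) (fu : Polynomial F)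
    (hfu_deg : fu.degree < (n : WithBot ℕ))
    (hfu_val : ∀ i : Fin n, fu.eval (α ^ (i : ℕ)) = u i)
    (hu : Polynomial F)
    (hhu : ∀ m : ℕ, hu.coeff m = if m < k then 0 else fu.coeff m)
    (lu : Polynomial F) (hlu_monic : lu.Monic)
    (hlu_mem : ∃ g : Polynomial F, g.degree < (k : WithBot ℕ) ∧
      (Polynomial.X ^ n - 1) ∣ lu * (hu + g))
    (hlu_min : ∀ μ : Polynomial F, μ.Monic →
      (∃ g : Polynomial F, g.degree < (k : WithBot ℕ) ∧
        (Polynomial.X ^ n - 1) ∣ μ * (hu + g)) →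
      lu.degree ≤ μ.degree)
    (g : Polynomial F) (hg : g.degree < (k : WithBot ℕ))
    (hdvd : (Polynomial.X ^ n - 1) ∣ lu * (hu + g)) :
    ∀ g' : Polynomial F, g'.degree < (k : WithBot ℕ) →
      (Finset.univ.filter fun γ : F => γ ≠ 0 ∧ (hu + g').eval γ = 0).card ≤
        (Finset.univ.filter fun γ : F => γ ≠ 0 ∧ (hu + g).eval γ = 0).card := by
  classical
  intro g' hg'
  have hn1 : 1 ≤ n := le_trans hk1 hkn
  have hcard : Fintype.card F = n + 1 := by
    have h1 : 1 ≤ Fintype.card F := Fintype.card_pos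
    omega
  set E : Finset F := Finset.univ.filter (fun γ => γ ≠ 0) with hE
  have hEcard : E.card = n := by
    rw [hE, Finset.filter_ne', Finset.card_erase_of_mem (Finset.mem_univ 0),
      Finset.card_univ, hcard]
    omega
  have hXn_monic : ((X : F[X]) ^ n - 1).Monic := by
    have := monic_X_pow_sub_C (1 : F) (by omega : n ≠ 0)
    simpa using this
  have hXn_ne : ((X : F[X]) ^ n - 1) ≠ 0 := hXn_monic.ne_zero
  have hXn_deg : ((X : F[X]) ^ n - 1).natDegree = n := by
    have := natDegree_X_pow_sub_C (n := n) (r := (1 : F))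
    simpa using this
  have hroot : ∀ γ : F, γ ≠ 0 → ((X : F[X]) ^ n - 1).eval γ = 0 := by
    intro γ hγ
    have h1 : γ ^ (Fintype.card F - 1) = 1 := FiniteField.pow_card_sub_one_eq_one γ hγ
    rw [hn]
    simp [h1]
  -- X^n - 1 = ∏_{γ ∈ E} (X - C γ)
  have hmemE : ∀ γ : F, γ ∈ E ↔ γ ≠ 0 := by
    intro γ; simp [hE]
  have hprod_dvd : (∏ γ ∈ E, (X - C γ)) ∣ ((X : F[X]) ^ n - 1) := by
    rw [Finset.prod_eq_multiset_prod, Multiset.prod_X_sub_C_dvd_iff_le_roots hXn_ne,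
      Multiset.le_iff_subset E.nodup]
    intro γ hγ
    rw [mem_roots hXn_ne]
    exact hroot γ ((hmemE γ).mp hγ)
  have hP_monic : (∏ γ ∈ E, (X - C γ)).Monic :=
    monic_prod_of_monic _ _ fun γ _ => monic_X_sub_C γ
  have hP_deg : (∏ γ ∈ E, (X - C γ)).natDegree = n := by
    rw [natDegree_prod_of_monic _ _ fun γ _ => monic_X_sub_C γ]
    simp [hEcard]
  have hprod : ((X : F[X]) ^ n - 1) = ∏ γ ∈ E, (X - C γ) :=
    eq_of_monic_of_dvd_of_natDegree_le hP_monic hXn_monic hprod_dvd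
      (by rw [hXn_deg, hP_deg])
  -- split E into roots and non-roots of hu + g'
  set R' : Finset F := E.filter (fun γ => (hu + g').eval γ = 0) with hR'
  set S' : Finset F := E.filter (fun γ => ¬ (hu + g').eval γ = 0) with hS'
  have hsplit' : R'.card + S'.card = n := by
    rw [hR', hS', Finset.card_filter_add_card_filter_not, hEcard]
  set lam : Polynomial F := ∏ γ ∈ S', (X - C γ) with hlam
  have hlam_monic : lam.Monic := monic_prod_of_monic _ _ fun γ _ => monic_X_sub_C γ
  have hlam_deg : lam.natDegree = S'.card := by
    rw [hlam, natDegree_prod_of_monic _ _ fun γ _ => monic_X_sub_C γ]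
    simp
  -- (X^n - 1) ∣ lam * (hu + g')
  have hlam_dvd : ((X : F[X]) ^ n - 1) ∣ lam * (hu + g') := by
    have hR'dvd : (∏ γ ∈ R', (X - C γ)) ∣ (hu + g') := by
      rcases eq_or_ne (hu + g') 0 with h0 | h0
      · rw [h0]; exact dvd_zero _
      · rw [Finset.prod_eq_multiset_prod, Multiset.prod_X_sub_C_dvd_iff_le_roots h0,
          Multiset.le_iff_subset R'.nodup]
        intro γ hγ
        rw [mem_roots h0]
        exact (Finset.mem_filter.mp hγ).2
    have hEsplit : ((X : F[X]) ^ n - 1) = lam * ∏ γ ∈ R', (X - C γ) := by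
      rw [hprod, hlam, hR', hS', mul_comm]
      exact (Finset.prod_filter_mul_prod_filter_not E _ _).symm
    rw [hEsplit]
    exact mul_dvd_mul_left lam hR'dvd
  -- minimality: natDegree lu ≤ S'.card
  have hmin : lu.natDegree ≤ S'.card := by
    have := hlu_min lam hlam_monic ⟨g', hg', hlam_dvd⟩
    rw [← hlam_deg]
    exact natDegree_le_natDegree this
  -- non-roots of hu + g are roots of lu
  set T : Finset F := E.filter (fun γ => ¬ (hu + g).eval γ = 0) with hT
  have hsplitg : (E.filter (fun γ => (hu + g).eval γ = 0)).card + T.card = n := by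
    rw [hT, Finset.card_filter_add_card_filter_not, hEcard]
  have hlu_ne : lu ≠ 0 := hlu_monic.ne_zero
  have hT_sub : T ⊆ lu.roots.toFinset := by
    intro γ hγ
    rw [Finset.mem_filter] at hγ
    obtain ⟨hγE, hγne⟩ := hγ
    obtain ⟨c, hc⟩ := hdvd
    have heval : lu.eval γ * (hu + g).eval γ = 0 := by
      have := congrArg (Polynomial.eval γ) hc
      simpa [hroot γ ((hmemE γ).mp hγE)] using this
    rcases mul_eq_zero.mp heval with h | h
    · rw [Multiset.mem_toFinset, mem_roots hlu_ne]
      exact h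
    · exact absurd h hγne
  have hT_card : T.card ≤ lu.natDegree := by
    calc T.card ≤ lu.roots.toFinset.card := Finset.card_le_card hT_sub
    _ ≤ Multiset.card lu.roots := lu.roots.toFinset_card_le
    _ ≤ lu.natDegree := lu.card_roots'
  -- rewrite the goal's filters
  have hL : (Finset.univ.filter fun γ : F => γ ≠ 0 ∧ (hu + g').eval γ = 0) = R' := by
    rw [hR', hE, Finset.filter_filter]
  have hR : (Finset.univ.filter fun γ : F => γ ≠ 0 ∧ (hu + g).eval γ = 0) =
      E.filter (fun γ => (hu + g).eval γ = 0) := by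
    rw [hE, Finset.filter_filter]
  rw [hL, hR]
  omega
end

section
/- For any polynomial p ∈ 𝔽_q[x], the set {λ ∈ 𝔽_q[x] : (x^n − 1) divides λ·p} equals the set of polynomial multiples of ∏_{γ ∈ 𝔽_q ∖ {0}, p(γ) ≠ 0} (x − γ); that is, (x^n − 1) divides λ·p if and only if ∏_{γ ∈ 𝔽_q ∖ {0}, p(γ) ≠ 0} (x − γ) divides λ. -/
/-!
The nonzero elements of `𝔽_q` are exactly the roots of `X ^ (q - 1) - 1`, all simple, so this
polynomial is `∏_{γ ≠ 0} (X - γ)`. A product of distinct linear factors divides `f` iff `f`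
vanishes at each of their roots, so `X ^ (q - 1) - 1 ∣ λ p` says `λ(γ) p(γ) = 0` for all
`γ ≠ 0`, i.e. `λ(γ) = 0` whenever `γ ≠ 0` and `p(γ) ≠ 0`.
-/

open Polynomial Finset

namespace Polynomial

variable {K : Type*} [Field K]

theorem prod_X_sub_C_dvd_iff (s : Finset K) (f : K[X]) :
    ∏ γ ∈ s, (X - C γ) ∣ f ↔ ∀ γ ∈ s, f.IsRoot γ := by
  refine ⟨fun h γ hγ => dvd_iff_isRoot.1 ((dvd_prod_of_mem (fun γ => X - C γ) hγ).trans h),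
    fun h => ?_⟩
  exact prod_dvd_of_coprime (fun _ _ _ _ hne => pairwise_coprime_X_sub_C Function.injective_id hne)
    fun γ hγ => dvd_iff_isRoot.2 (h γ hγ)

theorem prod_X_sub_C_dvd_mul_iff (s : Finset K) (lam p : K[X])
    [DecidablePred fun γ : K => p.eval γ ≠ 0] :
    ∏ γ ∈ s, (X - C γ) ∣ lam * p ↔ ∏ γ ∈ s.filter (fun γ => p.eval γ ≠ 0), (X - C γ) ∣ lam := by
  simp only [prod_X_sub_C_dvd_iff, mem_filter, IsRoot.def, eval_mul, mul_eq_zero, and_imp]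
  exact forall₂_congr fun γ _ => or_iff_not_imp_right

end Polynomial

theorem FiniteField.X_pow_card_sub_one_sub_one_eq_prod {K : Type*} [Field K] [Fintype K]
    [DecidableEq K] :
    (X : K[X]) ^ (Fintype.card K - 1) - 1 = ∏ γ ∈ univ.filter (· ≠ 0), (X - C γ) := by
  have hq : Fintype.card K - 1 ≠ 0 := by have := Fintype.one_lt_card (α := K); omega
  refine eq_of_monic_of_dvd_of_natDegree_le (monic_prod_of_monic _ _ fun γ _ => monic_X_sub_C γ)
    (by simpa using monic_X_pow_sub_C (1 : K) hq) ?_ ?_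
  · refine (prod_X_sub_C_dvd_iff _ _).2 fun γ hγ => ?_
    simp [FiniteField.pow_card_sub_one_eq_one γ (mem_filter.1 hγ).2]
  · rw [← C_1, natDegree_X_pow_sub_C, natDegree_finsetProd_X_sub_C_eq_card, filter_ne',
      card_erase_of_mem (mem_univ _), card_univ]

/-- `(x^n - 1) ∣ λ·p` iff `∏_{γ ≠ 0, p(γ) ≠ 0} (x - γ)` divides `λ`. -/
theorem stmt_9 {F : Type*} [Field F] [Fintype F] [DecidableEq F]
    (n : ℕ) (hn : n = Fintype.card F - 1)
    (p lam : Polynomial F) :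
    (Polynomial.X ^ n - 1) ∣ lam * p ↔
      (∏ γ ∈ Finset.univ.filter (fun γ : F => γ ≠ 0 ∧ p.eval γ ≠ 0),
        (Polynomial.X - Polynomial.C γ)) ∣ lam := by
  rw [hn, FiniteField.X_pow_card_sub_one_sub_one_eq_prod, prod_X_sub_C_dvd_mul_iff, filter_filter]
end

section
/- Let u ∈ 𝔽_q^n and let t be the minimum Hamming weight of a vector e ∈ 𝔽_q^n such that u − e ∈ RS_{q,α}(k). Then the minimal degree of a monic polynomial in Λ equals t; that is, deg λ_u = t. -/
open Polynomial

private lemma aux_prod_dvd {F : Type*} [Field F] (s : Finset F) (p : F[X]) (hp : p ≠ 0)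
    (h : ∀ x ∈ s, p.eval x = 0) : (∏ x ∈ s, (X - C x)) ∣ p := by
  rw [Finset.prod_eq_multiset_prod, Multiset.prod_X_sub_C_dvd_iff_le_roots hp,
    Finset.val_le_iff_val_subset]
  intro x hx
  exact Polynomial.mem_roots'.mpr ⟨hp, h x hx⟩

private lemma aux_prod_monic {F : Type*} [Field F] (s : Finset F) :
    (∏ x ∈ s, (X - C x) : F[X]).Monic :=
  monic_prod_of_monic _ _ fun x _ => monic_X_sub_C x

private lemma aux_prod_natDegree {F : Type*} [Field F] (s : Finset F) :
    (∏ x ∈ s, (X - C x) : F[X]).natDegree = s.card := by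
  rw [natDegree_prod_of_monic _ _ fun x _ => monic_X_sub_C x]
  simp [natDegree_X_sub_C]

/-- if `t` is the minimum Hamming weight of a vector `e` with
`u - e ∈ RS_{q,α}(k)`, then a monic polynomial `λ_u` of minimal degree in `Λ` has
degree exactly `t`. -/
theorem stmt_10 {F : Type*} [Field F] [Fintype F] [DecidableEq F] (α : F)
    (n k : ℕ) (hn : n = Fintype.card F - 1) (hα : orderOf α = n)
    (hk1 : 1 ≤ k) (hkn : k ≤ n)
    (u e : Fin n → F)
    (he : ∃ a : Polynomial F, a.degree < (k : WithBot ℕ) ∧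
      ∀ i : Fin n, u i - e i = a.eval (α ^ (i : ℕ)))
    (hmin : ∀ e' : Fin n → F,
      (∃ a : Polynomial F, a.degree < (k : WithBot ℕ) ∧
        ∀ i : Fin n, u i - e' i = a.eval (α ^ (i : ℕ))) →
      (Finset.univ.filter fun i => e i ≠ 0).card ≤
        (Finset.univ.filter fun i => e' i ≠ 0).card)
    (fu : Polynomial F)
    (hfu_deg : fu.degree < (n : WithBot ℕ))
    (hfu_val : ∀ i : Fin n, fu.eval (α ^ (i : ℕ)) = u i)
    (hu : Polynomial F)
    (hhu : ∀ m : ℕ, hu.coeff m = if m < k then 0 else fu.coeff m)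
    (lu : Polynomial F) (hlu_monic : lu.Monic)
    (hlu_mem : ∃ g : Polynomial F, g.degree < (k : WithBot ℕ) ∧
      (Polynomial.X ^ n - 1) ∣ lu * (hu + g))
    (hlu_min : ∀ μ : Polynomial F, μ.Monic →
      (∃ g : Polynomial F, g.degree < (k : WithBot ℕ) ∧
        (Polynomial.X ^ n - 1) ∣ μ * (hu + g)) →
      lu.degree ≤ μ.degree) :
    lu.natDegree = (Finset.univ.filter fun i => e i ≠ 0).card := by
  classical
  have hn1 : 1 ≤ n := hk1.trans hkn
  have hα1 : α ^ n = 1 := hα ▸ pow_orderOf_eq_one α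
  have hα0 : α ≠ 0 := by
    intro h0
    rw [h0, zero_pow (by omega : n ≠ 0)] at hα1
    exact zero_ne_one hα1
  have hinj : ∀ i j : Fin n, α ^ (i : ℕ) = α ^ (j : ℕ) → i = j := by
    intro i j h
    have hord : orderOf (Units.mk0 α hα0) = n := by
      rw [← orderOf_units, Units.val_mk0, hα]
    have h' : (Units.mk0 α hα0) ^ (i : ℕ) = (Units.mk0 α hα0) ^ (j : ℕ) :=
      Units.ext (by simpa using h)
    have h2 := pow_inj_mod.mp h'
    rw [hord, Nat.mod_eq_of_lt i.isLt, Nat.mod_eq_of_lt j.isLt] at h2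
    exact Fin.ext h2
  set g0 : Polynomial F := fu - hu with hg0def
  have hg0 : g0.degree < (k : WithBot ℕ) := by
    rw [degree_lt_iff_coeff_zero]
    intro m hm
    have hm' : ¬ m < k := not_lt.mpr hm
    simp [hg0def, coeff_sub, hhu m, hm']
  have hhu_eval : ∀ i : Fin n, hu.eval (α ^ (i : ℕ)) = u i - g0.eval (α ^ (i : ℕ)) := by
    intro i
    rw [← hfu_val i]
    simp [hg0def]
  -- X^n - 1 is nonzero and its roots include all α^i
  have hXmonic : (X ^ n - 1 : F[X]).Monic := by
    simpa using monic_X_pow_sub_C (1 : F) (by omega)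
  have hXne : (X ^ n - 1 : F[X]) ≠ 0 := hXmonic.ne_zero
  have hXdeg : (X ^ n - 1 : F[X]).natDegree = n := by
    simpa using natDegree_X_pow_sub_C (n := n) (r := (1 : F))
  set Tall : Finset F := Finset.univ.image (fun i : Fin n => α ^ (i : ℕ)) with hTalldef
  have hTallcard : Tall.card = n := by
    rw [hTalldef, Finset.card_image_of_injective _ fun i j => hinj i j]
    simp
  have hXn : (X ^ n - 1 : F[X]) = ∏ x ∈ Tall, (X - C x) := by
    have hdvd : (∏ x ∈ Tall, (X - C x)) ∣ (X ^ n - 1 : F[X]) := by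
      apply aux_prod_dvd _ _ hXne
      intro x hx
      obtain ⟨i, -, rfl⟩ := Finset.mem_image.mp hx
      rw [eval_sub, eval_one, eval_pow, eval_X, ← pow_mul, mul_comm (i : ℕ) n,
        pow_mul, hα1, one_pow, sub_self]
    refine (eq_of_dvd_of_natDegree_le_of_leadingCoeff hdvd ?_ ?_).symm
    · rw [hXdeg, aux_prod_natDegree, hTallcard]
    · rw [(aux_prod_monic Tall).leadingCoeff, hXmonic.leadingCoeff]
  have hdvd_iff : ∀ p : F[X],
      (X ^ n - 1 : F[X]) ∣ p ↔ ∀ i : Fin n, p.eval (α ^ (i : ℕ)) = 0 := by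
    intro p
    constructor
    · rintro ⟨q, rfl⟩ i
      rw [eval_mul, eval_sub, eval_one, eval_pow, eval_X, ← pow_mul, mul_comm (i : ℕ) n,
        pow_mul, hα1, one_pow, sub_self, zero_mul]
    · intro h
      by_cases hp : p = 0
      · simp [hp]
      rw [hXn]
      apply aux_prod_dvd _ _ hp
      intro x hx
      obtain ⟨i, -, rfl⟩ := Finset.mem_image.mp hx
      exact h i
  -- upper bound
  obtain ⟨a, ha, hea⟩ := he
  set S : Finset (Fin n) := Finset.univ.filter (fun i => e i ≠ 0) with hSdef
  set T : Finset F := S.image (fun i : Fin n => α ^ (i : ℕ)) with hTdef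
  have hTcard : T.card = S.card :=
    Finset.card_image_of_injOn fun i _ j _ h => hinj i j h
  have hub : lu.natDegree ≤ S.card := by
    have hmem : ∃ g : Polynomial F, g.degree < (k : WithBot ℕ) ∧
        (X ^ n - 1 : F[X]) ∣ (∏ x ∈ T, (X - C x)) * (hu + g) := by
      refine ⟨g0 - a, (degree_sub_le _ _).trans_lt (max_lt hg0 ha), ?_⟩
      rw [hdvd_iff]
      intro i
      have heval : (hu + (g0 - a)).eval (α ^ (i : ℕ)) = e i := by
        have hthis := hea i
        simp only [eval_add, eval_sub, hhu_eval i]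
        linear_combination hthis
      rw [eval_mul, heval]
      by_cases hei : e i = 0
      · simp [hei]
      · have hmemT : α ^ (i : ℕ) ∈ T :=
          Finset.mem_image_of_mem _ (by simp [hSdef, hei])
        rw [eval_prod, Finset.prod_eq_zero hmemT (by simp), zero_mul]
    have hle := hlu_min _ (aux_prod_monic T) hmem
    have := natDegree_le_natDegree hle
    rwa [aux_prod_natDegree, hTcard] at this
  -- lower bound
  obtain ⟨g, hg, hdvd⟩ := hlu_mem
  set e' : Fin n → F := fun i => u i - (g0 - g).eval (α ^ (i : ℕ)) with he'def
  have hmin' := hmin e' ⟨g0 - g, (degree_sub_le _ _).trans_lt (max_lt hg0 hg),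
    fun i => by simp only [he'def]; ring⟩
  set S' : Finset (Fin n) := Finset.univ.filter (fun i => e' i ≠ 0) with hS'def
  set T' : Finset F := S'.image (fun i : Fin n => α ^ (i : ℕ)) with hT'def
  have hroot : ∀ x ∈ T', lu.eval x = 0 := by
    intro x hx
    obtain ⟨i, hiS, rfl⟩ := Finset.mem_image.mp hx
    have h0 := (hdvd_iff _).mp hdvd i
    rw [eval_mul] at h0
    have heval : (hu + g).eval (α ^ (i : ℕ)) = e' i := by
      simp only [he'def, eval_add, eval_sub, hhu_eval i]
      ring
    rw [heval] at h0
    have hne : e' i ≠ 0 := by simpa [hS'def] using hiS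
    exact (mul_eq_zero.mp h0).resolve_right hne
  have hlune : lu ≠ 0 := hlu_monic.ne_zero
  have hlb : S'.card ≤ lu.natDegree := by
    have hd := natDegree_le_of_dvd (aux_prod_dvd T' lu hlune hroot) hlune
    rwa [aux_prod_natDegree,
      Finset.card_image_of_injOn fun i _ j _ h => hinj i j h] at hd
  exact le_antisymm hub (le_trans hmin' hlb)
end

section
/- Let λ_u be a monic polynomial of minimal degree in Λ, write t = deg λ_u and λ_u = x^t + l_{t−1}x^{t−1} + … + l_1 x + l_0. Then for every i with 1 ≤ i ≤ n − k − t, the coefficients satisfy Σ_{j=0}^{t−1} u(α^{i+j})·l_j = −u(α^{t+i}); that is, (l_0, …, l_{t−1}) solves the linear system whose i-th row is (u(α^i), u(α^{i+1}), …, u(α^{i+t−1})) with right-hand side −u(α^{t+i}). -/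
open Polynomial

/-- writing `λ_u = x^t + l_{t-1}x^{t-1} + … + l_0` for a monic polynomial
of minimal degree in `Λ`, the coefficients satisfy, for all `1 ≤ i ≤ n - k - t`,
`∑_{j=0}^{t-1} u(α^{i+j}) l_j = -u(α^{t+i})`, where `u(β) = ∑_r u_r β^r`. -/
theorem stmt_11 {F : Type*} [Field F] [Fintype F] (α : F)
    (n k : ℕ) (hn : n = Fintype.card F - 1) (hα : orderOf α = n)
    (hk1 : 1 ≤ k) (hkn : k ≤ n)
    (u : Fin n → F) (fu : Polynomial F)
    (hfu_deg : fu.degree < (n : WithBot ℕ))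
    (hfu_val : ∀ i : Fin n, fu.eval (α ^ (i : ℕ)) = u i)
    (hu : Polynomial F)
    (hhu : ∀ m : ℕ, hu.coeff m = if m < k then 0 else fu.coeff m)
    (lu : Polynomial F) (hlu_monic : lu.Monic)
    (hlu_mem : ∃ g : Polynomial F, g.degree < (k : WithBot ℕ) ∧
      (Polynomial.X ^ n - 1) ∣ lu * (hu + g))
    (hlu_min : ∀ μ : Polynomial F, μ.Monic →
      (∃ g : Polynomial F, g.degree < (k : WithBot ℕ) ∧
        (Polynomial.X ^ n - 1) ∣ μ * (hu + g)) →
      lu.degree ≤ μ.degree) :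
    ∀ i : ℕ, 1 ≤ i → i ≤ n - k - lu.natDegree →
      ∑ j ∈ Finset.range lu.natDegree,
          (∑ r : Fin n, u r * (α ^ (i + j)) ^ (r : ℕ)) * lu.coeff j =
        -∑ r : Fin n, u r * (α ^ (lu.natDegree + i)) ^ (r : ℕ) := by
  intro i hi1 hi2
  set t := lu.natDegree with ht
  obtain ⟨g, hg_deg, Q, hPQ⟩ := hlu_mem
  have hn1 : 1 ≤ n := le_trans hk1 hkn
  have hikt : i + k + t ≤ n := by omega
  have hcard : 1 ≤ Fintype.card F := Fintype.card_pos
  have hnF : (n : F) = -1 := by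
    have h0 : ((Fintype.card F : ℕ) : F) = 0 := Nat.cast_card_eq_zero F
    rw [hn, Nat.cast_sub hcard, h0, Nat.cast_one, zero_sub]
  -- geometric sum
  have hgeom : ∀ d : ℕ, ∑ r ∈ Finset.range n, (α ^ d) ^ r = if n ∣ d then (n : F) else 0 := by
    intro d
    by_cases hd : n ∣ d
    · have h1 : α ^ d = 1 := by
        rw [← hα] at hd; exact orderOf_dvd_iff_pow_eq_one.mp hd
      simp [h1, hd]
    · have hx1 : α ^ d ≠ 1 := fun h => hd (hα ▸ orderOf_dvd_iff_pow_eq_one.mpr h)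
      have hαn : α ^ n = 1 := by rw [← hα]; exact pow_orderOf_eq_one α
      have hxn : (α ^ d) ^ n = 1 := by
        rw [← pow_mul, mul_comm, pow_mul, hαn, one_pow]
      have hgs := geom_sum_mul (α ^ d) n
      rw [hxn, sub_self] at hgs
      have hne : α ^ d - 1 ≠ 0 := sub_ne_zero.mpr hx1
      rw [if_neg hd]
      exact (mul_eq_zero.mp hgs).resolve_right hne
  -- DFT lemma
  have hfu_nd : fu.natDegree < n := by
    rcases eq_or_ne fu 0 with h | h
    · simp only [h, natDegree_zero]; omega
    · exact (natDegree_lt_iff_degree_lt h).mpr hfu_deg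
  have hdft : ∀ s : ℕ, 1 ≤ s → s ≤ n - 1 →
      ∑ r : Fin n, u r * (α ^ s) ^ (r : ℕ) = - fu.coeff (n - s) := by
    intro s hs1 hs2
    calc ∑ r : Fin n, u r * (α ^ s) ^ (r : ℕ)
        = ∑ r ∈ Finset.range n,
            (∑ m ∈ Finset.range n, fu.coeff m * (α ^ r) ^ m) * (α ^ s) ^ r := by
          rw [← Fin.sum_univ_eq_sum_range
            (fun r => (∑ m ∈ Finset.range n, fu.coeff m * (α ^ r) ^ m) * (α ^ s) ^ r) n]
          refine Finset.sum_congr rfl fun r _ => ?_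
          rw [← hfu_val r, eval_eq_sum_range' hfu_nd]
      _ = ∑ m ∈ Finset.range n, fu.coeff m * ∑ r ∈ Finset.range n, (α ^ (m + s)) ^ r := by
          simp only [Finset.sum_mul]
          rw [Finset.sum_comm]
          refine Finset.sum_congr rfl fun m _ => ?_
          rw [Finset.mul_sum]
          refine Finset.sum_congr rfl fun r _ => ?_
          rw [mul_assoc]
          congr 1
          rw [← pow_mul, ← pow_mul, ← pow_add, ← pow_mul]
          congr 1
          ring
      _ = ∑ m ∈ Finset.range n, fu.coeff m * (if n ∣ (m + s) then (n : F) else 0) := by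
          exact Finset.sum_congr rfl fun m _ => by rw [hgeom]
      _ = - fu.coeff (n - s) := by
          rw [Finset.sum_eq_single (n - s)]
          · have h1 : n - s + s = n := by omega
            rw [h1, if_pos dvd_rfl, hnF, mul_neg_one]
          · intro m hm hne
            rw [if_neg, mul_zero]
            rintro ⟨c, hc⟩
            have hmn := Finset.mem_range.mp hm
            match c, hc with
            | 0, hc => omega
            | 1, hc => omega
            | (c+2), hc =>
              have h2 : n * 2 ≤ n * (c + 2) := Nat.mul_le_mul_left n (by omega)
              omega
          · intro h
            exact absurd (Finset.mem_range.mpr (by omega : n - s < n)) h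
  set m0 := n - i with hm0
  -- degree facts
  have hhu_deg : hu.degree < (n : WithBot ℕ) := by
    rw [degree_lt_iff_coeff_zero]
    intro m hm
    rw [hhu m, if_neg (by omega)]
    exact coeff_eq_zero_of_degree_lt (lt_of_lt_of_le hfu_deg (by exact_mod_cast hm))
  have hs_deg : (hu + g).degree < (n : WithBot ℕ) :=
    lt_of_le_of_lt (degree_add_le _ _)
      (max_lt hhu_deg (lt_of_lt_of_le hg_deg (by exact_mod_cast hkn)))
  -- vanishing of product coefficient at m0
  have hP0 : (lu * (hu + g)).coeff m0 = 0 := by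
    rcases eq_or_ne Q 0 with hQ | hQ
    · rw [hPQ, hQ, mul_zero, coeff_zero]
    · have hdeg1 : (X ^ n - 1 : F[X]).natDegree = n := by
        rw [show (1 : F[X]) = C 1 from (map_one C).symm, natDegree_X_pow_sub_C]
      have hXn : (X ^ n - 1 : F[X]) ≠ 0 := by
        intro h
        rw [h, natDegree_zero] at hdeg1; omega
      have hlu0 : lu ≠ 0 := hlu_monic.ne_zero
      have hsne : hu + g ≠ 0 := by
        intro h
        apply hQ
        rw [h, mul_zero] at hPQ
        exact (mul_eq_zero.mp hPQ.symm).resolve_left hXn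
      have hnatP : (lu * (hu + g)).natDegree = t + (hu + g).natDegree :=
        natDegree_mul hlu0 hsne
      have hsn : (hu + g).natDegree < n := (natDegree_lt_iff_degree_lt hsne).mpr hs_deg
      have hQdeg : Q.natDegree < t := by
        have h2 : ((X ^ n - 1 : F[X]) * Q).natDegree = n + Q.natDegree := by
          rw [natDegree_mul hXn hQ, hdeg1]
        rw [hPQ] at hnatP
        omega
      rw [hPQ, mul_comm, mul_sub, mul_one, coeff_sub, coeff_mul_X_pow',
        if_neg (by omega), zero_sub, neg_eq_zero]
      exact coeff_eq_zero_of_natDegree_lt (by omega)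
  -- expansion of product coefficient
  have hexp : (lu * (hu + g)).coeff m0
      = ∑ j ∈ Finset.range (t + 1), lu.coeff j * (hu + g).coeff (m0 - j) := by
    rw [coeff_mul, Finset.Nat.sum_antidiagonal_eq_sum_range_succ_mk]
    symm
    apply Finset.sum_subset
    · exact Finset.range_subset_range.mpr (by omega)
    · intro j hj hnj
      have hjt : t < j := by
        have := Finset.mem_range.mp hj
        have h2 : ¬ j < t + 1 := fun h => hnj (Finset.mem_range.mpr h)
        omega
      rw [coeff_eq_zero_of_natDegree_lt hjt, zero_mul]
  have hsc : ∀ j, j ≤ t → (hu + g).coeff (m0 - j) = fu.coeff (m0 - j) := by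
    intro j hj
    have hkle : k ≤ m0 - j := by omega
    rw [coeff_add, hhu, if_neg (by omega),
      coeff_eq_zero_of_degree_lt (lt_of_lt_of_le hg_deg (by exact_mod_cast hkle)), add_zero]
  have hkey : ∑ j ∈ Finset.range (t + 1), lu.coeff j * fu.coeff (m0 - j) = 0 := by
    rw [← hP0, hexp]
    exact Finset.sum_congr rfl fun j hj => by
      rw [hsc j (by have := Finset.mem_range.mp hj; omega)]
  rw [Finset.sum_range_succ, hlu_monic.coeff_natDegree, one_mul] at hkey
  -- rewrite the goal via the DFT lemma
  have hL : ∑ j ∈ Finset.range t, (∑ r : Fin n, u r * (α ^ (i + j)) ^ (r : ℕ)) * lu.coeff j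
      = ∑ j ∈ Finset.range t, -(lu.coeff j * fu.coeff (m0 - j)) := by
    refine Finset.sum_congr rfl fun j hj => ?_
    have hj' := Finset.mem_range.mp hj
    have h := hdft (i + j) (by omega) (by omega)
    have he : n - (i + j) = m0 - j := by omega
    rw [he] at h
    rw [h]; ring
  have hR : (∑ r : Fin n, u r * (α ^ (t + i)) ^ (r : ℕ)) = - fu.coeff (m0 - t) := by
    have h := hdft (t + i) (by omega) (by omega)
    have he : n - (t + i) = m0 - t := by omega
    rw [he] at h
    exact h
  rw [hL, hR, Finset.sum_neg_distrib]
  linear_combination -hkey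
end

section
/- Let e ∈ 𝔽_q^n be a vector with exactly t ≥ 1 nonzero coordinates. Then the t×t matrix whose (i,j) entry is e(α^{i+j−1}) (for 1 ≤ i, j ≤ t) has nonzero determinant. Indeed, if the nonzero positions of e are i_1 < … < i_t, this matrix factors as W·D·Wᵀ where W is the t×t Vandermonde-type matrix with (r,s) entry α^{(r−1)i_s} and D is the invertible diagonal matrix diag(α^{i_1}e_{i_1}, …, α^{i_t}e_{i_t}). -/
open Matrix Polynomial

/-- for `e` with exactly `t ≥ 1` nonzero coordinates at positions
`ι 0 < ι 1 < … < ι (t-1)`, the `t×t` matrix `M` with entries `e(α^{i+j-1})` (1-based)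
has nonzero determinant; indeed `M = W · D · Wᵀ` with `W r s = α^{(r-1) ι_s}` and
`D = diag(α^{ι_s} e_{ι_s})` invertible.  Here `e(β) = ∑_r e_r β^r`. -/
theorem stmt_12 {F : Type*} [Field F] [Fintype F] (α : F)
    (n : ℕ) (hn : n = Fintype.card F - 1) (hα : orderOf α = n)
    (e : Fin n → F) (t : ℕ) (ht : 1 ≤ t)
    (ι : Fin t → Fin n) (hmono : StrictMono ι)
    (hsupp : ∀ j : Fin n, e j ≠ 0 ↔ ∃ s : Fin t, ι s = j) :
    let M : Matrix (Fin t) (Fin t) F :=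
      Matrix.of fun i j => ∑ r : Fin n, e r * (α ^ ((i : ℕ) + (j : ℕ) + 1)) ^ (r : ℕ)
    let W : Matrix (Fin t) (Fin t) F :=
      Matrix.of fun r s => α ^ ((r : ℕ) * (ι s : ℕ))
    let D : Matrix (Fin t) (Fin t) F :=
      Matrix.diagonal fun s => α ^ (ι s : ℕ) * e (ι s)
    M.det ≠ 0 ∧ M = W * D * Wᵀ ∧ IsUnit D.det := by
  intro M W D
  -- n is positive
  have hnpos : 0 < n := by
    have : Fin t := ⟨0, ht⟩
    exact (ι this).pos
  -- α ≠ 0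
  have hα0 : α ≠ 0 := by
    intro h
    have h1 : α ^ n = 1 := by rw [← hα]; exact pow_orderOf_eq_one α
    rw [h, zero_pow hnpos.ne'] at h1
    exact zero_ne_one h1
  have hιinj : Function.Injective ι := hmono.injective
  have hes : ∀ s : Fin t, e (ι s) ≠ 0 := fun s => (hsupp (ι s)).mpr ⟨s, rfl⟩
  -- sums over support
  have key : ∀ x : F, ∑ r : Fin n, e r * x ^ (r : ℕ) =
      ∑ s : Fin t, e (ι s) * x ^ ((ι s : ℕ)) := by
    intro x
    rw [← Finset.sum_image (s := Finset.univ) (g := ι)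
      (f := fun r : Fin n => e r * x ^ (r : ℕ)) (fun a _ b _ h => hιinj h)]
    refine (Finset.sum_subset (Finset.subset_univ _) ?_).symm
    intro r _ hr
    have : e r = 0 := by
      by_contra h
      obtain ⟨s, hs⟩ := (hsupp r).mp h
      exact hr (Finset.mem_image.mpr ⟨s, Finset.mem_univ s, hs⟩)
    simp [this]
  -- factorization
  have hfac : M = W * D * Wᵀ := by
    ext i j
    rw [Matrix.mul_assoc]
    simp only [M, W, D, Matrix.of_apply, Matrix.mul_apply, Matrix.diagonal_mul,
      Matrix.transpose_apply]
    rw [key]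
    refine Finset.sum_congr rfl fun s _ => ?_
    rw [Finset.sum_eq_single s
      (fun b _ hb => by rw [Matrix.diagonal_apply_ne _ (Ne.symm hb), zero_mul]) (by simp),
      Matrix.diagonal_apply_eq]
    rw [← pow_mul]
    have : ((i : ℕ) + j + 1) * (ι s : ℕ) =
        (i : ℕ) * (ι s : ℕ) + ((ι s : ℕ) + (j : ℕ) * (ι s : ℕ)) := by ring
    rw [this, pow_add, pow_add]
    ring
  -- D invertible
  have hD : IsUnit D.det := by
    rw [Matrix.det_diagonal]
    exact isUnit_iff_ne_zero.mpr (Finset.prod_ne_zero_iff.mpr fun s _ =>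
      mul_ne_zero (pow_ne_zero _ hα0) (hes s))
  -- W is a (transposed) Vandermonde matrix
  have hW : W = (Matrix.vandermonde fun s => α ^ (ι s : ℕ))ᵀ := by
    ext r s
    simp only [W, Matrix.transpose_apply, Matrix.vandermonde_apply, Matrix.of_apply,
      ← pow_mul, Nat.mul_comm]
  have hWdet : W.det ≠ 0 := by
    rw [hW, Matrix.det_transpose, Matrix.det_vandermonde]
    apply Finset.prod_ne_zero_iff.mpr
    intro i _
    apply Finset.prod_ne_zero_iff.mpr
    intro j hj
    rw [Finset.mem_Ioi] at hj
    intro h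
    have hij : α ^ (ι j : ℕ) = α ^ (ι i : ℕ) := sub_eq_zero.mp h
    have : (ι j : ℕ) = (ι i : ℕ) := by
      refine pow_injOn_Iio_orderOf ?_ ?_ hij <;>
        · rw [hα]; exact Set.mem_Iio.mpr (Fin.is_lt _)
    exact absurd (hιinj (Fin.ext this)) (ne_of_gt hj)
  refine ⟨?_, hfac, hD⟩
  rw [hfac, Matrix.det_mul, Matrix.det_mul, Matrix.det_transpose]
  exact mul_ne_zero (mul_ne_zero hWdet hD.ne_zero) hWdet
end

section
/- Let u ∈ 𝔽_q^n, let e be a vector of minimum Hamming weight such that u − e ∈ RS_{q,α}(k), and let t be the Hamming weight of e. For h with t ≤ h ≤ (n−k)/2, let A_h be the h×h matrix with (i,j) entry u(α^{i+j−1}). Then det(A_h) = 0 whenever t < h ≤ (n−k)/2, while det(A_t) ≠ 0; consequently, the number of errors t (if at most (n−k)/2) is the maximum integer h ≤ (n−k)/2 with det(A_h) ≠ 0. -/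
open Matrix Polynomial

/-- with `t` the number of errors (the Hamming weight of a minimum-weight
`e` with `u - e ∈ RS_{q,α}(k)`), `t ≤ (n-k)/2`, and `A_h` the `h×h` matrix with entries
`u(α^{i+j-1})` (1-based), one has `det A_h = 0` for `t < h ≤ (n-k)/2` and `det A_t ≠ 0`;
hence `t` is the greatest `h ≤ (n-k)/2` with `det A_h ≠ 0`. -/
theorem stmt_13 {F : Type*} [Field F] [Fintype F] [DecidableEq F] (α : F)
    (n k : ℕ) (hn : n = Fintype.card F - 1) (hα : orderOf α = n)
    (hk1 : 1 ≤ k) (hkn : k ≤ n)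
    (u e : Fin n → F)
    (he : ∃ a : Polynomial F, a.degree < (k : WithBot ℕ) ∧
      ∀ i : Fin n, u i - e i = a.eval (α ^ (i : ℕ)))
    (hmin : ∀ e' : Fin n → F,
      (∃ a : Polynomial F, a.degree < (k : WithBot ℕ) ∧
        ∀ i : Fin n, u i - e' i = a.eval (α ^ (i : ℕ))) →
      (Finset.univ.filter fun i => e i ≠ 0).card ≤
        (Finset.univ.filter fun i => e' i ≠ 0).card)
    (t : ℕ) (htw : t = (Finset.univ.filter fun i => e i ≠ 0).card)
    (h2t : 2 * t ≤ n - k) :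
    (∀ h : ℕ, t < h → 2 * h ≤ n - k →
      (Matrix.of fun i j : Fin h =>
        ∑ r : Fin n, u r * (α ^ ((i : ℕ) + (j : ℕ) + 1)) ^ (r : ℕ)).det = 0) ∧
    (Matrix.of fun i j : Fin t =>
        ∑ r : Fin n, u r * (α ^ ((i : ℕ) + (j : ℕ) + 1)) ^ (r : ℕ)).det ≠ 0 ∧
    IsGreatest {h : ℕ | 2 * h ≤ n - k ∧
      (Matrix.of fun i j : Fin h =>
        ∑ r : Fin n, u r * (α ^ ((i : ℕ) + (j : ℕ) + 1)) ^ (r : ℕ)).det ≠ 0} t := by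
  classical
  obtain ⟨a, hadeg, hae⟩ := he
  set E := Finset.univ.filter (fun i : Fin n => e i ≠ 0) with hE
  have hn1 : 1 ≤ n := hk1.trans hkn
  have hαn : α ^ n = 1 := by rw [← hα]; exact pow_orderOf_eq_one α
  have hα0 : α ≠ 0 := by
    intro h0
    rw [h0, zero_pow (by omega)] at hαn
    exact zero_ne_one hαn
  have hpow1 : ∀ m : ℕ, 0 < m → m < n → α ^ m ≠ 1 := by
    intro m hm1 hmn h
    have hd := orderOf_dvd_of_pow_eq_one h
    rw [hα] at hd
    have := Nat.le_of_dvd hm1 hd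
    omega
  -- syndrome computation
  have syn : ∀ m : ℕ, 1 ≤ m → m ≤ n - k →
      ∑ r : Fin n, u r * (α ^ m) ^ (r : ℕ) = ∑ r ∈ E, e r * (α ^ m) ^ (r : ℕ) := by
    intro m hm1 hm2
    have step1 : ∑ r : Fin n, (u r - e r) * (α ^ m) ^ (r : ℕ) = 0 := by
      have expand : ∀ r : Fin n, (u r - e r) * (α ^ m) ^ (r : ℕ) =
          ∑ s ∈ Finset.range (a.natDegree + 1),
            a.coeff s * (α ^ (s + m)) ^ (r : ℕ) := by
        intro r
        rw [hae r, Polynomial.eval_eq_sum_range, Finset.sum_mul]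
        refine Finset.sum_congr rfl fun s _ => ?_
        rw [mul_assoc]
        congr 1
        rw [← pow_mul, ← pow_mul, ← pow_add, ← pow_mul]
        congr 1
        ring
      rw [Finset.sum_congr rfl fun r _ => expand r, Finset.sum_comm]
      refine Finset.sum_eq_zero fun s hs => ?_
      by_cases hc : a.coeff s = 0
      · simp [hc]
      · have hane : a ≠ 0 := fun h => hc (by simp [h])
        have hsk : s < k := by
          by_contra hsk
          push_neg at hsk
          exact hc (Polynomial.coeff_eq_zero_of_degree_lt
            (lt_of_lt_of_le hadeg (by exact_mod_cast Nat.cast_le.mpr hsk)))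
        have hsm1 : 0 < s + m := by omega
        have hsmn : s + m < n := by omega
        have hgeom : ∑ r : Fin n, (α ^ (s + m)) ^ (r : ℕ) = 0 := by
          rw [Fin.sum_univ_eq_sum_range (fun i => (α ^ (s + m)) ^ i)]
          rw [geom_sum_eq (hpow1 _ hsm1 hsmn)]
          rw [← pow_mul, mul_comm, pow_mul, hαn, one_pow, sub_self, zero_div]
        rw [← Finset.mul_sum, hgeom, mul_zero]
    have step2 : ∑ r : Fin n, u r * (α ^ m) ^ (r : ℕ) =
        ∑ r : Fin n, e r * (α ^ m) ^ (r : ℕ) := by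
      have := Finset.sum_sub_distrib (s := (Finset.univ : Finset (Fin n)))
        (f := fun r => u r * (α ^ m) ^ (r : ℕ)) (g := fun r => e r * (α ^ m) ^ (r : ℕ))
      rw [← sub_eq_zero, ← this]
      calc ∑ r : Fin n, (u r * (α ^ m) ^ (r : ℕ) - e r * (α ^ m) ^ (r : ℕ))
          = ∑ r : Fin n, (u r - e r) * (α ^ m) ^ (r : ℕ) := by
            refine Finset.sum_congr rfl fun r _ => by ring
        _ = 0 := step1
    rw [step2, hE]
    exact (Finset.sum_filter_of_ne (fun r _ hne => by
      intro h0; exact hne (by rw [h0, zero_mul]))).symm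
  have entry : ∀ (h : ℕ), 2 * h ≤ n - k → ∀ i j : Fin h,
      ∑ r : Fin n, u r * (α ^ ((i : ℕ) + (j : ℕ) + 1)) ^ (r : ℕ) =
      ∑ r ∈ E, e r * (α ^ ((i : ℕ) + (j : ℕ) + 1)) ^ (r : ℕ) := by
    intro h hh i j
    exact syn _ (by omega) (by have := i.isLt; have := j.isLt; omega)
  have part1 : ∀ h : ℕ, t < h → 2 * h ≤ n - k →
      (Matrix.of fun i j : Fin h =>
        ∑ r : Fin n, u r * (α ^ ((i : ℕ) + (j : ℕ) + 1)) ^ (r : ℕ)).det = 0 := by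
    intro h hth hh
    set B : Matrix (Fin h) {x // x ∈ E} F :=
      Matrix.of fun i r => e r.1 * α ^ (((i : ℕ) + 1) * (r.1 : ℕ)) with hB
    set C : Matrix {x // x ∈ E} (Fin h) F :=
      Matrix.of fun r j => α ^ ((j : ℕ) * (r.1 : ℕ)) with hC
    have hfac : (Matrix.of fun i j : Fin h =>
        ∑ r : Fin n, u r * (α ^ ((i : ℕ) + (j : ℕ) + 1)) ^ (r : ℕ)) = B * C := by
      ext i j
      rw [Matrix.of_apply, entry h hh i j, Matrix.mul_apply]
      rw [← Finset.sum_coe_sort E]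
      refine Finset.sum_congr rfl fun r _ => ?_
      simp only [hB, hC, Matrix.of_apply]
      rw [mul_assoc, ← pow_add, ← pow_mul]
      congr 2
      ring
    have hnli : ¬ LinearIndependent F (fun i : Fin h => (B i : {x // x ∈ E} → F)) := by
      intro hli
      have h1 := hli.fintype_card_le_finrank
      rw [Module.finrank_fintype_fun_eq_card, Fintype.card_coe, Fintype.card_fin] at h1
      omega
    obtain ⟨g, hg0, i0, hgi0⟩ := Fintype.not_linearIndependent_iff.mp hnli
    rw [hfac, ← Matrix.exists_vecMul_eq_zero_iff]
    refine ⟨g, fun hg => hgi0 (congrFun hg i0), ?_⟩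
    rw [← Matrix.vecMul_vecMul]
    have hgB : g ᵥ* B = 0 := by
      ext r
      have hz := congrFun hg0 r
      simpa [Matrix.vecMul, dotProduct, Finset.sum_apply] using hz
    rw [hgB, Matrix.zero_vecMul]
  have part2 : (Matrix.of fun i j : Fin t =>
      ∑ r : Fin n, u r * (α ^ ((i : ℕ) + (j : ℕ) + 1)) ^ (r : ℕ)).det ≠ 0 := by
    set ρ : Fin t → Fin n := fun i => (E.equivFin.symm (finCongr htw i) : Fin n) with hρ
    have hρE : ∀ i, ρ i ∈ E := fun i => (E.equivFin.symm (finCongr htw i)).2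
    have hρinj : Function.Injective ρ := by
      intro r s hrs
      exact (finCongr htw).injective (E.equivFin.symm.injective (Subtype.ext hrs))
    set x : Fin t → F := fun i => α ^ ((ρ i : ℕ)) with hx
    set d : Fin t → F := fun i => e (ρ i) * x i with hd
    have hxinj : Function.Injective x := by
      intro r s hrs
      refine hρinj (Fin.ext (pow_injOn_Iio_orderOf ?_ ?_ hrs))
      · rw [hα]; exact (ρ r).isLt
      · rw [hα]; exact (ρ s).isLt
    have hfac : (Matrix.of fun i j : Fin t =>
        ∑ r : Fin n, u r * (α ^ ((i : ℕ) + (j : ℕ) + 1)) ^ (r : ℕ)) =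
        (Matrix.vandermonde x)ᵀ * (Matrix.diagonal d * Matrix.vandermonde x) := by
      ext i j
      rw [Matrix.of_apply, entry t h2t i j, Matrix.mul_apply]
      rw [← Finset.sum_coe_sort E]
      refine (Fintype.sum_equiv ((finCongr htw).trans E.equivFin.symm) _ _ fun r => ?_).symm
      rw [Matrix.diagonal_mul, Matrix.transpose_apply, Matrix.vandermonde_apply,
        Matrix.vandermonde_apply]
      show x r ^ (i : ℕ) * (d r * x r ^ (j : ℕ)) = e (ρ r) * (α ^ ((i:ℕ)+(j:ℕ)+1)) ^ ((ρ r : Fin n) : ℕ)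
      simp only [hx, hd]
      ring
    rw [hfac, Matrix.det_mul, Matrix.det_mul, Matrix.det_transpose, Matrix.det_diagonal]
    have hv := Matrix.det_vandermonde_ne_zero_iff.mpr hxinj
    refine mul_ne_zero hv (mul_ne_zero (Finset.prod_ne_zero_iff.mpr fun i _ => ?_) hv)
    have hei : e (ρ i) ≠ 0 := by
      have := hρE i
      rw [hE, Finset.mem_filter] at this
      exact this.2
    exact mul_ne_zero hei (pow_ne_zero _ hα0)
  refine ⟨part1, part2, ⟨⟨h2t, part2⟩, ?_⟩⟩
  intro h hh
  by_contra hlt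
  push_neg at hlt
  exact hh.2 (part1 h hlt hh.1)
end

section
/- Let u ∈ 𝔽_q^n, let e be a vector of minimum Hamming weight such that u − e ∈ RS_{q,α}(k), let t be the Hamming weight of e, and assume t ≤ (n−k)/2. Then the linear system in unknowns (l_0, …, l_{t−1}) given by Σ_{j=1}^{t} u(α^{i+j−1})·l_{j−1} = −u(α^{t+i}) for all 1 ≤ i ≤ n−k−t has a unique solution, and this solution is the unique solution of the square subsystem consisting of the first t equations; in particular, the t×t matrix with (i,j) entry u(α^{i+j−1}) is invertible. -/
open Matrix Polynomial

/-- with `t ≤ (n-k)/2` the number of errors, the linear system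
`∑_{j=1}^{t} u(α^{i+j-1}) l_{j-1} = -u(α^{t+i})` for `1 ≤ i ≤ n-k-t` has a unique
solution, which is also the unique solution of the square subsystem given by the first
`t` equations; in particular the `t×t` matrix with entries `u(α^{i+j-1})` is
invertible.  Here `u(β) = ∑_r u_r β^r`. -/
theorem stmt_14 {F : Type*} [Field F] [Fintype F] [DecidableEq F] (α : F)
    (n k : ℕ) (hn : n = Fintype.card F - 1) (hα : orderOf α = n)
    (hk1 : 1 ≤ k) (hkn : k ≤ n)
    (u e : Fin n → F)
    (he : ∃ a : Polynomial F, a.degree < (k : WithBot ℕ) ∧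
      ∀ i : Fin n, u i - e i = a.eval (α ^ (i : ℕ)))
    (hmin : ∀ e' : Fin n → F,
      (∃ a : Polynomial F, a.degree < (k : WithBot ℕ) ∧
        ∀ i : Fin n, u i - e' i = a.eval (α ^ (i : ℕ))) →
      (Finset.univ.filter fun i => e i ≠ 0).card ≤
        (Finset.univ.filter fun i => e' i ≠ 0).card)
    (t : ℕ) (htw : t = (Finset.univ.filter fun i => e i ≠ 0).card)
    (h2t : 2 * t ≤ n - k) :
    (∃! l : Fin t → F, ∀ i : ℕ, 1 ≤ i → i ≤ n - k - t →
      ∑ j : Fin t, (∑ r : Fin n, u r * (α ^ (i + (j : ℕ))) ^ (r : ℕ)) * l j =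
        -∑ r : Fin n, u r * (α ^ (t + i)) ^ (r : ℕ)) ∧
    (∃! l : Fin t → F, ∀ i : ℕ, 1 ≤ i → i ≤ t →
      ∑ j : Fin t, (∑ r : Fin n, u r * (α ^ (i + (j : ℕ))) ^ (r : ℕ)) * l j =
        -∑ r : Fin n, u r * (α ^ (t + i)) ^ (r : ℕ)) ∧
    (∀ l : Fin t → F,
      (∀ i : ℕ, 1 ≤ i → i ≤ n - k - t →
        ∑ j : Fin t, (∑ r : Fin n, u r * (α ^ (i + (j : ℕ))) ^ (r : ℕ)) * l j =
          -∑ r : Fin n, u r * (α ^ (t + i)) ^ (r : ℕ)) ↔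
      (∀ i : ℕ, 1 ≤ i → i ≤ t →
        ∑ j : Fin t, (∑ r : Fin n, u r * (α ^ (i + (j : ℕ))) ^ (r : ℕ)) * l j =
          -∑ r : Fin n, u r * (α ^ (t + i)) ^ (r : ℕ))) ∧
    IsUnit (Matrix.of fun i j : Fin t =>
      ∑ r : Fin n, u r * (α ^ ((i : ℕ) + (j : ℕ) + 1)) ^ (r : ℕ)).det := by
  classical
  have hn1 : 1 ≤ n := le_trans hk1 hkn
  have hα1 : α ^ n = 1 := hα ▸ pow_orderOf_eq_one α
  have hα0 : α ≠ 0 := by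
    intro h
    rw [h, zero_pow (by omega)] at hα1
    exact zero_ne_one hα1
  -- injectivity of powers of α below n
  have haux : ∀ r r' : ℕ, r ≤ r' → r' < n → α ^ r = α ^ r' → r = r' := by
    intro r r' hle hlt hrr
    by_contra hne
    have h1 : α ^ r * α ^ (r' - r) = α ^ r * 1 := by
      rw [mul_one, ← pow_add, Nat.add_sub_cancel' hle]; exact hrr.symm
    have h2 : α ^ (r' - r) = 1 := mul_left_cancel₀ (pow_ne_zero _ hα0) h1
    have h3 := orderOf_dvd_of_pow_eq_one h2
    rw [hα] at h3
    have := Nat.le_of_dvd (by omega) h3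
    omega
  have hpinj : ∀ r r' : ℕ, r < n → r' < n → α ^ r = α ^ r' → r = r' := by
    intro r r' hr hr' hrr
    rcases le_total r r' with h | h
    · exact haux r r' h hr' hrr
    · exact (haux r' r h hr hrr.symm).symm
  obtain ⟨a, ha, hue⟩ := he
  have hadeg : a.natDegree < k := by
    rcases eq_or_ne a 0 with h | h
    · simp [h]; omega
    · exact (Polynomial.natDegree_lt_iff_degree_lt h).mpr ha
  set E : Finset (Fin n) := Finset.univ.filter (fun i => e i ≠ 0) with hE
  have hcard : E.card = t := htw.symm
  set g : Fin t ≃o E := E.orderIsoOfFin hcard with hg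
  set x : Fin t → F := fun s => α ^ (((g s : Fin n) : ℕ)) with hx
  have hx0 : ∀ s, x s ≠ 0 := fun s => pow_ne_zero _ hα0
  have hxinj : Function.Injective x := by
    intro s s' h
    have h1 : ((g s : Fin n) : ℕ) = ((g s' : Fin n) : ℕ) :=
      hpinj _ _ (g s : Fin n).isLt (g s' : Fin n).isLt h
    exact g.injective (Subtype.ext (Fin.ext h1))
  have hgne : ∀ s : Fin t, e (g s) ≠ 0 := by
    intro s
    exact (Finset.mem_filter.mp (g s).2).2
  -- reindexing sums over E
  have hEsum : ∀ f : Fin n → F, ∑ r ∈ E, f r = ∑ s : Fin t, f (g s) := by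
    intro f
    rw [← Finset.sum_coe_sort E f]
    exact (Equiv.sum_comp g.toEquiv (fun a : E => f a)).symm
  -- syndrome identity
  have hS : ∀ m : ℕ, 1 ≤ m → m ≤ n - k →
      (∑ r : Fin n, u r * (α ^ m) ^ (r : ℕ)) = ∑ s : Fin t, e (g s) * x s ^ m := by
    intro m hm1 hm2
    have hsplit : ∀ r : Fin n, u r = a.eval (α ^ (r : ℕ)) + e r := by
      intro r
      have h := hue r
      linear_combination h
    have hzero : ∑ r : Fin n, a.eval (α ^ (r : ℕ)) * (α ^ m) ^ (r : ℕ) = 0 := by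
      have hterm : ∀ r : Fin n, a.eval (α ^ (r : ℕ)) * (α ^ m) ^ (r : ℕ)
          = ∑ s ∈ Finset.range k, a.coeff s * (α ^ (s + m)) ^ (r : ℕ) := by
        intro r
        rw [eval_eq_sum_range' hadeg, Finset.sum_mul]
        refine Finset.sum_congr rfl fun s _ => ?_
        rw [mul_assoc, ← pow_mul, ← pow_mul, ← pow_add, ← pow_mul]
        congr 2
        ring
      simp_rw [hterm]
      rw [Finset.sum_comm]
      apply Finset.sum_eq_zero
      intro s hs
      have hs' := Finset.mem_range.mp hs
      have hne1 : α ^ (s + m) ≠ 1 := by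
        intro h1
        have hd := orderOf_dvd_of_pow_eq_one h1
        rw [hα] at hd
        have := Nat.le_of_dvd (by omega) hd
        omega
      rw [← Finset.mul_sum]
      have hgeo : ∑ r : Fin n, (α ^ (s + m)) ^ (r : ℕ) = 0 := by
        rw [Fin.sum_univ_eq_sum_range (fun r => (α ^ (s + m)) ^ r) n, geom_sum_eq hne1,
          ← pow_mul, mul_comm, pow_mul, hα1, one_pow, sub_self, zero_div]
      rw [hgeo, mul_zero]
    calc ∑ r : Fin n, u r * (α ^ m) ^ (r : ℕ)
        = ∑ r : Fin n, (a.eval (α ^ (r : ℕ)) * (α ^ m) ^ (r : ℕ) + e r * (α ^ m) ^ (r : ℕ)) := by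
          refine Finset.sum_congr rfl fun r _ => ?_
          rw [hsplit r]; ring
      _ = (∑ r : Fin n, a.eval (α ^ (r : ℕ)) * (α ^ m) ^ (r : ℕ))
            + ∑ r : Fin n, e r * (α ^ m) ^ (r : ℕ) := Finset.sum_add_distrib
      _ = ∑ r : Fin n, e r * (α ^ m) ^ (r : ℕ) := by rw [hzero, zero_add]
      _ = ∑ r ∈ E, e r * (α ^ m) ^ (r : ℕ) := by
          symm
          apply Finset.sum_filter_of_ne
          intro r _ hr h0
          exact hr (by rw [h0, zero_mul])
      _ = ∑ s : Fin t, e (g s) * (α ^ m) ^ (((g s : Fin n)) : ℕ) :=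
          hEsum (fun r => e r * (α ^ m) ^ (r : ℕ))
      _ = ∑ s : Fin t, e (g s) * x s ^ m := by
          refine Finset.sum_congr rfl fun s _ => ?_
          rw [hx, ← pow_mul, ← pow_mul, Nat.mul_comm]
  -- the square matrix
  set M : Matrix (Fin t) (Fin t) F := Matrix.of fun i j : Fin t =>
      ∑ r : Fin n, u r * (α ^ ((i : ℕ) + (j : ℕ) + 1)) ^ (r : ℕ) with hMdef
  have hM : M = (Matrix.vandermonde x)ᵀ *
      (Matrix.diagonal (fun s => e (g s) * x s) * Matrix.vandermonde x) := by
    ext i j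
    rw [Matrix.mul_apply]
    have hij : (i : ℕ) + (j : ℕ) + 1 ≤ n - k := by
      have hi := i.isLt; have hj := j.isLt; omega
    show (∑ r : Fin n, u r * (α ^ ((i : ℕ) + (j : ℕ) + 1)) ^ (r : ℕ)) = _
    rw [hS ((i : ℕ) + (j : ℕ) + 1) (by omega) hij]
    refine Finset.sum_congr rfl fun s _ => ?_
    rw [Matrix.diagonal_mul, Matrix.transpose_apply, Matrix.vandermonde_apply,
      Matrix.vandermonde_apply]
    ring
  have hdet : IsUnit (M.det) := by
    rw [hM, Matrix.det_mul, Matrix.det_mul, Matrix.det_transpose, Matrix.det_diagonal,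
      Matrix.det_vandermonde]
    rw [isUnit_iff_ne_zero]
    have hvd : (∏ i : Fin t, ∏ j ∈ Finset.Ioi i, (x j - x i)) ≠ 0 := by
      rw [Finset.prod_ne_zero_iff]
      intro i _
      rw [Finset.prod_ne_zero_iff]
      intro j hj
      exact sub_ne_zero_of_ne fun h => (Finset.mem_Ioi.mp hj).ne' (hxinj h)
    have hprod : (∏ s : Fin t, (e (g s) * x s)) ≠ 0 := by
      rw [Finset.prod_ne_zero_iff]
      exact fun s _ => mul_ne_zero (hgne s) (hx0 s)
    exact mul_ne_zero hvd (mul_ne_zero hprod hvd)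
  -- error locator polynomial
  set Λ : Polynomial F := ∏ s : Fin t, (X - C (x s)) with hΛdef
  have hmon : Λ.Monic := monic_prod_of_monic _ _ fun s _ => monic_X_sub_C (x s)
  have hdegΛ : Λ.natDegree = t := by
    rw [hΛdef, Polynomial.natDegree_prod _ _ fun s _ => X_sub_C_ne_zero (x s)]
    simp
  have hroot : ∀ s : Fin t, Λ.eval (x s) = 0 := by
    intro s
    rw [hΛdef, eval_prod]
    exact Finset.prod_eq_zero (Finset.mem_univ s) (by simp)
  have hΛexp : ∀ y : F, Λ.eval y = (∑ j : Fin t, Λ.coeff (j : ℕ) * y ^ (j : ℕ)) + y ^ t := by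
    intro y
    rw [eval_eq_sum_range' (n := t + 1) (by rw [hdegΛ]; exact Nat.lt_succ_self t) y, Finset.sum_range_succ]
    congr 1
    · exact (Fin.sum_univ_eq_sum_range (fun j => Λ.coeff j * y ^ j) t).symm
    · rw [show Λ.coeff t = 1 from by rw [← hdegΛ]; exact hmon.coeff_natDegree, one_mul]
  set lam : Fin t → F := fun j => Λ.coeff (j : ℕ) with hlam
  -- key equation: lam solves the big system
  have hkey : ∀ i : ℕ, 1 ≤ i → i ≤ n - k - t →
      ∑ j : Fin t, (∑ r : Fin n, u r * (α ^ (i + (j : ℕ))) ^ (r : ℕ)) * lam j =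
        -∑ r : Fin n, u r * (α ^ (t + i)) ^ (r : ℕ) := by
    intro i h1 h2
    have hSij : ∀ j : Fin t, (∑ r : Fin n, u r * (α ^ (i + (j : ℕ))) ^ (r : ℕ))
        = ∑ s : Fin t, e (g s) * x s ^ (i + (j : ℕ)) := by
      intro j
      exact hS _ (by omega) (by have := j.isLt; omega)
    rw [hS (t + i) (by omega) (by omega)]
    simp_rw [hSij]
    apply eq_neg_of_add_eq_zero_left
    have step : ∀ s : Fin t,
        (∑ j : Fin t, e (g s) * x s ^ (i + (j : ℕ)) * lam j) + e (g s) * x s ^ (t + i)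
        = (e (g s) * x s ^ i) * Λ.eval (x s) := by
      intro s
      rw [hΛexp, mul_add, Finset.mul_sum]
      congr 1
      · refine Finset.sum_congr rfl fun j _ => ?_
        rw [pow_add]; ring
      · rw [pow_add]; ring
    calc (∑ j : Fin t, (∑ s : Fin t, e (g s) * x s ^ (i + (j : ℕ))) * lam j)
          + ∑ s : Fin t, e (g s) * x s ^ (t + i)
        = (∑ j : Fin t, ∑ s : Fin t, e (g s) * x s ^ (i + (j : ℕ)) * lam j)
          + ∑ s : Fin t, e (g s) * x s ^ (t + i) := by
          simp_rw [Finset.sum_mul]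
      _ = ∑ s : Fin t, ((∑ j : Fin t, e (g s) * x s ^ (i + (j : ℕ)) * lam j)
            + e (g s) * x s ^ (t + i)) := by
          rw [Finset.sum_comm, ← Finset.sum_add_distrib]
      _ = ∑ s : Fin t, (e (g s) * x s ^ i) * Λ.eval (x s) :=
          Finset.sum_congr rfl fun s _ => step s
      _ = 0 := Finset.sum_eq_zero fun s _ => by rw [hroot s, mul_zero]
  have htle : t ≤ n - k - t := by omega
  -- square system ⟹ mulVec equation
  have hsqvec : ∀ v : Fin t → F,
      (∀ i : ℕ, 1 ≤ i → i ≤ t →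
        ∑ j : Fin t, (∑ r : Fin n, u r * (α ^ (i + (j : ℕ))) ^ (r : ℕ)) * v j =
          -∑ r : Fin n, u r * (α ^ (t + i)) ^ (r : ℕ)) →
      M *ᵥ v = fun i' : Fin t =>
        -∑ r : Fin n, u r * (α ^ (t + ((i' : ℕ) + 1))) ^ (r : ℕ) := by
    intro v hv
    funext i'
    have h := hv ((i' : ℕ) + 1) (by omega) (by have := i'.isLt; omega)
    show ∑ j : Fin t, M i' j * v j = _
    rw [← h]
    refine Finset.sum_congr rfl fun j _ => ?_
    show (∑ r : Fin n, u r * (α ^ ((i' : ℕ) + (j : ℕ) + 1)) ^ (r : ℕ)) * v j = _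
    rw [show (i' : ℕ) + (j : ℕ) + 1 = ((i' : ℕ) + 1) + (j : ℕ) from by omega]
  -- injectivity of M *ᵥ ·
  have hMinj : ∀ v w : Fin t → F, M *ᵥ v = M *ᵥ w → v = w := by
    intro v w hvw
    have h1 : M⁻¹ *ᵥ (M *ᵥ v) = M⁻¹ *ᵥ (M *ᵥ w) := by rw [hvw]
    rwa [Matrix.mulVec_mulVec, Matrix.mulVec_mulVec, Matrix.nonsing_inv_mul M hdet,
      Matrix.one_mulVec, Matrix.one_mulVec] at h1
  have hsq_lam : ∀ i : ℕ, 1 ≤ i → i ≤ t →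
      ∑ j : Fin t, (∑ r : Fin n, u r * (α ^ (i + (j : ℕ))) ^ (r : ℕ)) * lam j =
        -∑ r : Fin n, u r * (α ^ (t + i)) ^ (r : ℕ) := by
    intro i h1 h2
    exact hkey i h1 (by omega)
  have husq : ∀ v : Fin t → F,
      (∀ i : ℕ, 1 ≤ i → i ≤ t →
        ∑ j : Fin t, (∑ r : Fin n, u r * (α ^ (i + (j : ℕ))) ^ (r : ℕ)) * v j =
          -∑ r : Fin n, u r * (α ^ (t + i)) ^ (r : ℕ)) → v = lam := by
    intro v hv
    exact hMinj v lam (by rw [hsqvec v hv, hsqvec lam hsq_lam])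
  refine ⟨⟨lam, hkey, fun v hv => husq v (fun i h1 h2 => hv i h1 (by omega))⟩,
    ⟨lam, hsq_lam, fun v hv => husq v hv⟩,
    fun v => ⟨fun hv i h1 h2 => hv i h1 (by omega),
      fun hv => by rw [husq v hv]; exact hkey⟩,
    hdet⟩
end

section
/- Let u ∈ 𝔽_q^n, let e be a vector of minimum Hamming weight such that u − e ∈ RS_{q,α}(k), let t ≥ 1 be the Hamming weight of e, and assume t ≤ (n−k)/2. Then the unique solution (l_0, …, l_{t−1}) of the square system Σ_{j=1}^{t} u(α^{i+j−1})·l_{j−1} = −u(α^{t+i}) for 1 ≤ i ≤ t satisfies l_0 ≠ 0. -/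
open Polynomial

private lemma geom_aux {F : Type*} [Field F] {n : ℕ} (β : F) (hβ1 : β ≠ 1)
    (hβn : β ^ n = 1) : ∑ r : Fin n, β ^ (r : ℕ) = 0 := by
  rw [Fin.sum_univ_eq_sum_range (fun i => β ^ i) n, geom_sum_eq hβ1, hβn, sub_self, zero_div]

/-- Vandermonde-type step: if `∑_{r∈E} c r * v r ^ i = 0` for `i = 1..t` with `|E| = t`,
`v` nonzero and injective on `E`, then `c` vanishes on `E`. -/
private lemma vand_aux {F : Type*} [Field F] {ι : Type*} [DecidableEq ι] (t : ℕ)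
    (E : Finset ι) (v c : ι → F) (hcard : E.card = t)
    (hv0 : ∀ r ∈ E, v r ≠ 0) (hvinj : Set.InjOn v E)
    (hkey : ∀ i : ℕ, 1 ≤ i → i ≤ t → ∑ r ∈ E, c r * v r ^ i = 0) :
    ∀ r ∈ E, c r = 0 := by
  intro r0 hr0
  set q : Polynomial F := X * ∏ r ∈ E.erase r0, (X - C (v r)) with hq
  have hprodnd : (∏ r ∈ E.erase r0, (X - C (v r))).natDegree = t - 1 := by
    rw [Polynomial.natDegree_prod _ _ (fun r _ => X_sub_C_ne_zero (v r))]
    simp [Finset.card_erase_of_mem hr0, hcard]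
  have hqnd : q.natDegree = t := by
    have ht : 1 ≤ t := hcard ▸ Finset.card_pos.mpr ⟨r0, hr0⟩
    rw [hq, natDegree_mul X_ne_zero
      (Finset.prod_ne_zero_iff.mpr fun r _ => X_sub_C_ne_zero (v r)), natDegree_X, hprodnd]
    omega
  have hq0 : q.coeff 0 = 0 := by
    rw [hq, Polynomial.mul_coeff_zero, coeff_X_zero, zero_mul]
  have h1 : ∑ r ∈ E, c r * q.eval (v r) = 0 := by
    have : ∀ r ∈ E, c r * q.eval (v r)
        = ∑ i ∈ Finset.range (t + 1), q.coeff i * (c r * v r ^ i) := by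
      intro r _
      rw [eval_eq_sum_range' (by omega : q.natDegree < t + 1), Finset.mul_sum]
      exact Finset.sum_congr rfl fun i _ => by ring
    rw [Finset.sum_congr rfl this, Finset.sum_comm]
    refine Finset.sum_eq_zero fun i hi => ?_
    rcases Nat.eq_zero_or_pos i with h | h
    · subst h; simp [hq0]
    · rw [← Finset.mul_sum, hkey i h (by simpa using Nat.lt_succ_iff.mp (Finset.mem_range.mp hi)),
        mul_zero]
  have h2 : ∑ r ∈ E, c r * q.eval (v r) = c r0 * q.eval (v r0) := by
    refine Finset.sum_eq_single_of_mem r0 hr0 fun r hr hne => ?_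
    have : q.eval (v r) = 0 := by
      rw [hq, eval_mul, eval_prod]
      rw [Finset.prod_eq_zero (Finset.mem_erase.mpr ⟨hne, hr⟩) (by simp)]
      ring
    rw [this, mul_zero]
  have hqe : q.eval (v r0) ≠ 0 := by
    rw [hq, eval_mul, eval_prod, eval_X]
    refine mul_ne_zero (hv0 r0 hr0) (Finset.prod_ne_zero_iff.mpr fun r hr => ?_)
    simp only [eval_sub, eval_X, eval_C, sub_ne_zero]
    intro h
    exact (Finset.mem_erase.mp hr).1 (hvinj hr0 (Finset.mem_of_mem_erase hr) h).symm
  have := h1.symm.trans h2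
  exact (mul_eq_zero.mp this.symm).resolve_right hqe

/-- with `1 ≤ t ≤ (n-k)/2` the number of errors, any solution
`(l_0, …, l_{t-1})` of the square system `∑_{j=1}^{t} u(α^{i+j-1}) l_{j-1} = -u(α^{t+i})`
(`1 ≤ i ≤ t`) satisfies `l_0 ≠ 0`.  Here `u(β) = ∑_r u_r β^r`. -/
theorem stmt_15 {F : Type*} [Field F] [Fintype F] [DecidableEq F] (α : F)
    (n k : ℕ) (hn : n = Fintype.card F - 1) (hα : orderOf α = n)
    (hk1 : 1 ≤ k) (hkn : k ≤ n)
    (u e : Fin n → F)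
    (he : ∃ a : Polynomial F, a.degree < (k : WithBot ℕ) ∧
      ∀ i : Fin n, u i - e i = a.eval (α ^ (i : ℕ)))
    (hmin : ∀ e' : Fin n → F,
      (∃ a : Polynomial F, a.degree < (k : WithBot ℕ) ∧
        ∀ i : Fin n, u i - e' i = a.eval (α ^ (i : ℕ))) →
      (Finset.univ.filter fun i => e i ≠ 0).card ≤
        (Finset.univ.filter fun i => e' i ≠ 0).card)
    (t : ℕ) (htw : t = (Finset.univ.filter fun i => e i ≠ 0).card)
    (ht1 : 0 < t) (h2t : 2 * t ≤ n - k) :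
    ∀ l : Fin t → F,
      (∀ i : ℕ, 1 ≤ i → i ≤ t →
        ∑ j : Fin t, (∑ r : Fin n, u r * (α ^ (i + (j : ℕ))) ^ (r : ℕ)) * l j =
          -∑ r : Fin n, u r * (α ^ (t + i)) ^ (r : ℕ)) →
      l ⟨0, ht1⟩ ≠ 0 := by
  intro l hl hl0
  obtain ⟨a, hadeg, hae⟩ := he
  set E : Finset (Fin n) := Finset.univ.filter (fun i => e i ≠ 0) with hE
  have hcard : E.card = t := htw.symm
  have hn0 : 0 < n := by omega
  have hα1 : α ^ n = 1 := by rw [← hα]; exact pow_orderOf_eq_one α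
  have hα0 : α ≠ 0 := by
    intro h; rw [h, zero_pow hn0.ne'] at hα1; exact one_ne_zero hα1.symm
  have hαm : ∀ m : ℕ, 0 < m → m < n → α ^ m ≠ 1 := by
    intro m hm1 hm2 h
    have hd := orderOf_dvd_of_pow_eq_one h
    rw [hα] at hd
    exact absurd (Nat.le_of_dvd hm1 hd) (by omega)
  have hgeo : ∀ m : ℕ, 0 < m → m < n → ∑ r : Fin n, (α ^ m) ^ (r : ℕ) = 0 := by
    intro m h1 h2
    exact geom_aux _ (hαm m h1 h2) (by rw [← pow_mul, mul_comm, pow_mul, hα1, one_pow])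
  -- injectivity of r ↦ α ^ r on Fin n
  have hvinj : ∀ r s : Fin n, α ^ (r : ℕ) = α ^ (s : ℕ) → r = s := by
    have key : ∀ r s : Fin n, (r : ℕ) ≤ (s : ℕ) → α ^ (r : ℕ) = α ^ (s : ℕ) → r = s := by
      intro r s hrs h
      have h2 : α ^ (r : ℕ) * (α ^ ((s : ℕ) - (r : ℕ)) - 1) = 0 := by
        rw [mul_sub, ← pow_add, mul_one]
        rw [show (r : ℕ) + ((s : ℕ) - (r : ℕ)) = (s : ℕ) by omega, h, sub_self]
      have h3 : α ^ ((s : ℕ) - (r : ℕ)) = 1 :=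
        sub_eq_zero.mp ((mul_eq_zero.mp h2).resolve_left (pow_ne_zero _ hα0))
      rcases Nat.eq_zero_or_pos ((s : ℕ) - (r : ℕ)) with h4 | h4
      · exact Fin.ext (by omega)
      · exact absurd h3 (hαm _ h4 (by omega))
    intro r s h
    rcases le_total (r : ℕ) (s : ℕ) with hh | hh
    · exact key r s hh h
    · exact (key s r hh h.symm).symm
  have hadeg' : a.natDegree < k := by
    by_cases h : a = 0
    · simp [h]; omega
    · exact (Polynomial.natDegree_lt_iff_degree_lt h).mpr hadeg
  -- syndrome identity
  have hS : ∀ m : ℕ, 1 ≤ m → m ≤ n - k →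
      ∑ r : Fin n, u r * (α ^ m) ^ (r : ℕ) = ∑ r ∈ E, e r * (α ^ m) ^ (r : ℕ) := by
    intro m hm1 hm2
    have h0 : ∑ r : Fin n, (u r - e r) * (α ^ m) ^ (r : ℕ) = 0 := by
      have step : ∀ r : Fin n, (u r - e r) * (α ^ m) ^ (r : ℕ)
          = ∑ s ∈ Finset.range k, a.coeff s * (α ^ (s + m)) ^ (r : ℕ) := by
        intro r
        rw [hae r, eval_eq_sum_range' hadeg', Finset.sum_mul]
        refine Finset.sum_congr rfl fun s _ => ?_
        rw [mul_assoc]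
        congr 1
        rw [← pow_mul, ← pow_mul, ← pow_add, ← pow_mul]
        congr 1
        ring
      rw [Finset.sum_congr rfl (fun r _ => step r), Finset.sum_comm]
      refine Finset.sum_eq_zero fun s hs => ?_
      have hs' : s < k := Finset.mem_range.mp hs
      rw [← Finset.mul_sum, hgeo (s + m) (by omega) (by omega), mul_zero]
    have h1 : ∑ r : Fin n, u r * (α ^ m) ^ (r : ℕ)
        = ∑ r : Fin n, e r * (α ^ m) ^ (r : ℕ) := by
      have := Finset.sum_congr rfl (fun (r : Fin n) (_ : r ∈ Finset.univ) => sub_mul (u r) (e r) ((α ^ m) ^ (r : ℕ)))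
      rw [this, Finset.sum_sub_distrib] at h0
      exact sub_eq_zero.mp h0
    rw [h1, hE]
    exact (Finset.sum_filter_of_ne (fun r _ hne => by
      intro h; apply hne; rw [h, zero_mul])).symm
  -- key linear relations for the error-locator values
  have hkey : ∀ i : ℕ, 1 ≤ i → i ≤ t →
      ∑ r ∈ E, (e r * ((∑ j : Fin t, l j * (α ^ (r : ℕ)) ^ (j : ℕ)) + (α ^ (r : ℕ)) ^ t))
        * (α ^ (r : ℕ)) ^ i = 0 := by
    intro i hi1 hi2
    have h := hl i hi1 hi2
    have h2 : (∑ j : Fin t, (∑ r ∈ E, e r * (α ^ (i + (j : ℕ))) ^ (r : ℕ)) * l j)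
        + ∑ r ∈ E, e r * (α ^ (t + i)) ^ (r : ℕ) = 0 := by
      rw [← hS (t + i) (by omega) (by omega)]
      have : ∑ j : Fin t, (∑ r ∈ E, e r * (α ^ (i + (j : ℕ))) ^ (r : ℕ)) * l j
          = ∑ j : Fin t, (∑ r : Fin n, u r * (α ^ (i + (j : ℕ))) ^ (r : ℕ)) * l j := by
        refine Finset.sum_congr rfl fun j _ => ?_
        rw [hS (i + (j : ℕ)) (by omega) (by have := j.2; omega)]
      rw [this, h]
      ring
    have hXp : ∀ (r : Fin n) (b d : ℕ), (α ^ (r : ℕ)) ^ b * (α ^ (r : ℕ)) ^ d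
        = (α ^ (b + d)) ^ (r : ℕ) := by
      intro r b d
      rw [← pow_add, ← pow_mul, ← pow_mul]
      congr 1
      ring
    calc ∑ r ∈ E, (e r * ((∑ j : Fin t, l j * (α ^ (r : ℕ)) ^ (j : ℕ)) + (α ^ (r : ℕ)) ^ t))
          * (α ^ (r : ℕ)) ^ i
        = ∑ r ∈ E, ((∑ j : Fin t, e r * (α ^ (i + (j : ℕ))) ^ (r : ℕ) * l j)
            + e r * (α ^ (t + i)) ^ (r : ℕ)) := by
          refine Finset.sum_congr rfl fun r _ => ?_
          have e1 : ∀ j : Fin t, e r * (α ^ (i + (j : ℕ))) ^ (r : ℕ) * l j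
              = e r * (l j * (α ^ (r : ℕ)) ^ (j : ℕ)) * (α ^ (r : ℕ)) ^ i := by
            intro j; rw [← hXp r i (j : ℕ)]; ring
          have e2 : e r * (α ^ (t + i)) ^ (r : ℕ)
              = e r * (α ^ (r : ℕ)) ^ t * (α ^ (r : ℕ)) ^ i := by
            rw [← hXp r t i]; ring
          rw [Finset.sum_congr rfl (fun j _ => e1 j), e2, ← Finset.sum_mul, ← Finset.mul_sum]
          ring
      _ = (∑ j : Fin t, (∑ r ∈ E, e r * (α ^ (i + (j : ℕ))) ^ (r : ℕ)) * l j)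
            + ∑ r ∈ E, e r * (α ^ (t + i)) ^ (r : ℕ) := by
          rw [Finset.sum_add_distrib, Finset.sum_comm]
          congr 1
          refine Finset.sum_congr rfl fun j _ => ?_
          rw [Finset.sum_mul]
      _ = 0 := h2
  -- conclude the locator polynomial values vanish on E
  have hσ : ∀ r ∈ E, (∑ j : Fin t, l j * (α ^ (r : ℕ)) ^ (j : ℕ)) + (α ^ (r : ℕ)) ^ t = 0 := by
    intro r hr
    have := vand_aux t E (fun r : Fin n => α ^ (r : ℕ))
      (fun r : Fin n => e r * ((∑ j : Fin t, l j * (α ^ (r : ℕ)) ^ (j : ℕ)) + (α ^ (r : ℕ)) ^ t))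
      hcard (fun r _ => pow_ne_zero _ hα0)
      (fun r hr s hs h => hvinj r s h) hkey r hr
    have her : e r ≠ 0 := by
      rw [hE] at hr; exact (Finset.mem_filter.mp hr).2
    exact (mul_eq_zero.mp this).resolve_left her
  -- final contradiction with l 0 = 0
  obtain ⟨t', rfl⟩ : ∃ t', t = t' + 1 := ⟨t - 1, by omega⟩
  set τ : Polynomial F := X ^ t' + ∑ j : Fin t', C (l j.succ) * X ^ (j : ℕ) with hτ
  have hcoeff : τ.coeff t' = 1 := by
    rw [hτ, coeff_add, coeff_X_pow, if_pos rfl, finset_sum_coeff]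
    rw [Finset.sum_eq_zero, add_zero]
    intro j _
    rw [coeff_C_mul, coeff_X_pow, if_neg (by have := j.isLt; omega), mul_zero]
  have hτne : τ ≠ 0 := fun h => by simp [h] at hcoeff
  have hτdeg : τ.natDegree ≤ t' := by
    rw [hτ]
    refine le_trans (natDegree_add_le _ _) (max_le (by simp [natDegree_X_pow]) ?_)
    refine natDegree_sum_le_of_forall_le _ _ fun j _ => ?_
    refine le_trans (natDegree_C_mul_le _ _) ?_
    rw [natDegree_X_pow]
    have := j.isLt; omega
  have hτeval : ∀ x : F, τ.eval x = x ^ t' + ∑ j : Fin t', l j.succ * x ^ (j : ℕ) := by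
    intro x
    simp [hτ, eval_finset_sum]
  have hroot : ∀ r ∈ E, τ.eval (α ^ (r : ℕ)) = 0 := by
    intro r hr
    set x : F := α ^ (r : ℕ) with hx
    have hx0 : x ≠ 0 := pow_ne_zero _ hα0
    have hs := hσ r hr
    rw [Fin.sum_univ_succ] at hs
    have hz : l (0 : Fin (t' + 1)) = 0 := by
      rw [show (0 : Fin (t' + 1)) = ⟨0, ht1⟩ from rfl]; exact hl0
    rw [hz, zero_mul, zero_add] at hs
    have hmul : x * τ.eval x = 0 := by
      rw [hτeval, mul_add, Finset.mul_sum, add_comm, ← hs]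
      congr 1
      · refine Finset.sum_congr rfl fun j _ => ?_
        rw [Fin.val_succ, pow_succ']
        ring
      · rw [← pow_succ']
    exact (mul_eq_zero.mp hmul).resolve_left hx0
  have himg : (E.image fun r : Fin n => α ^ (r : ℕ)).card = t' + 1 := by
    rw [Finset.card_image_of_injOn fun r _ s _ h => hvinj r s h, hcard]
  have hsub : (E.image fun r : Fin n => α ^ (r : ℕ)) ⊆ τ.roots.toFinset := by
    intro x hx
    obtain ⟨r, hr, rfl⟩ := Finset.mem_image.mp hx
    rw [Multiset.mem_toFinset, mem_roots hτne]
    exact hroot r hr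
  have : t' + 1 ≤ t' := by
    calc t' + 1 = (E.image fun r : Fin n => α ^ (r : ℕ)).card := himg.symm
      _ ≤ τ.roots.toFinset.card := Finset.card_le_card hsub
      _ ≤ Multiset.card τ.roots := Multiset.toFinset_card_le _
      _ ≤ τ.natDegree := τ.card_roots' 
      _ ≤ t' := hτdeg
  omega
end

section
/- Let u ∈ 𝔽_q^n, let e be a vector of minimum Hamming weight such that u − e ∈ RS_{q,α}(k), let t be the Hamming weight of e, and assume t ≤ (n−k)/2. Let λ_u be a monic polynomial of minimal degree in Λ, let d_u = deg f_u, and write λ_u·f_u = ζ_0 + ζ_1 x + … + ζ_{d_u+t} x^{d_u+t}. Set μ = ζ_n + ζ_{n+1} x + … + ζ_{d_u+t} x^{d_u+t−n}. Then λ_u divides λ_u·f_u − (x^n − 1)·μ, the polynomial g_c := (λ_u·f_u − (x^n − 1)·μ)/λ_u has degree less than k, and (g_c(1), g_c(α), g_c(α²), …, g_c(α^{n−1})) = u − e, the codeword of RS_{q,α}(k) at minimum Hamming distance from u. -/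
open Polynomial Finset

/-!
Let `a` be the codeword polynomial, so that `f_u - a` interpolates the error `e`. The error
locator `L = ∏_{e_i ≠ 0} (X - α^i)` makes `L (f_u - a)` vanish at every `α^i`, so `L ∈ Λ`
(with `g` the part of `f_u - a` of degree `< k`) and `deg λ_u ≤ t`. If `X^n - 1` divides
`λ_u (h_u + g)`, then `λ_u (f_u - a) - λ_u (h_u + g)` has degree `< t + k ≤ n - t` and vanishes
at the `n - t` error-free positions, so it is zero and `λ_u f_u ≡ λ_u a` modulo `X^n - 1`.
Since `deg (λ_u f_u) < 2n`, subtracting `(X^n - 1) μ` reduces `λ_u f_u` to degree `< n`;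
as `deg (λ_u a) < n` as well, `λ_u f_u - (X^n - 1) μ = λ_u a`, i.e. `g_c = a`.
-/

section Degree

variable {R : Type*} [Ring R]

theorem degree_sub_lt_of_coeff_eq_ite {f h : R[X]} {k : ℕ}
    (hh : ∀ m, h.coeff m = if m < k then 0 else f.coeff m) : (f - h).degree < k := by
  rw [degree_lt_iff_coeff_zero]
  intro m hm
  simp [hh, not_lt.2 hm]

theorem coeff_sum_Icc_C_coeff_mul_X_pow_sub {P : R[X]} {n D : ℕ} (hP : P.natDegree ≤ D)
    (j : ℕ) : (∑ m ∈ Icc n D, C (P.coeff m) * X ^ (m - n)).coeff j = P.coeff (j + n) := by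
  simp_rw [finsetSum_coeff, coeff_C_mul_X_pow]
  rw [sum_eq_single (j + n)]
  · simp
  · intro m hm hmj
    rw [if_neg (by have := (mem_Icc.1 hm).1; omega)]
  · intro hj
    rw [coeff_eq_zero_of_natDegree_lt (by simp at hj; omega), ite_self]

theorem degree_sub_X_pow_sub_one_mul_sum_lt {P : R[X]} {n D : ℕ} (hP : P.natDegree ≤ D)
    (hD : D < 2 * n) :
    (P - (X ^ n - 1) * ∑ m ∈ Icc n D, C (P.coeff m) * X ^ (m - n)).degree <
      (n : WithBot ℕ) := by
  rw [degree_lt_iff_coeff_zero]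
  intro m hm
  rw [sub_mul, one_mul, coeff_sub, coeff_sub, coeff_X_pow_mul', if_pos hm,
    coeff_sum_Icc_C_coeff_mul_X_pow_sub hP, coeff_sum_Icc_C_coeff_mul_X_pow_sub hP,
    Nat.sub_add_cancel hm, coeff_eq_zero_of_natDegree_lt (by omega : P.natDegree < m + n)]
  abel

end Degree

theorem degree_mul_lt_of_natDegree_le {R : Type*} [Semiring R] [NoZeroDivisors R] {p q : R[X]}
    {a b : ℕ} (hp : p.natDegree ≤ a) (hq : q.degree < b) : (p * q).degree < (a + b : ℕ) := by
  rcases eq_or_ne q 0 with rfl | hq0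
  · simp
  rcases eq_or_ne p 0 with rfl | hp0
  · simp
  rw [degree_eq_natDegree (mul_ne_zero hp0 hq0), Nat.cast_lt, natDegree_mul hp0 hq0]
  have := (natDegree_lt_iff_degree_lt hq0).2 hq
  omega

theorem degree_X_pow_sub_one {R : Type*} [Ring R] [Nontrivial R] {n : ℕ} (hn : 0 < n) :
    (X ^ n - 1 : R[X]).degree = n := by
  simpa using degree_X_pow_sub_C hn (1 : R)

section OrderOf

variable {R : Type*} [CommRing R] {α : R} {n : ℕ}

theorem injective_fin_pow_of_orderOf_eq (hα : orderOf α = n) :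
    Function.Injective fun i : Fin n => α ^ (i : ℕ) := by
  subst hα
  exact fun i j hij => Fin.ext (pow_injOn_Iio_orderOf i.isLt j.isLt hij)

theorem isRoot_X_pow_sub_one_of_orderOf_eq (hα : orderOf α = n) (i : ℕ) :
    (X ^ n - 1 : R[X]).IsRoot (α ^ i) := by
  rw [IsRoot, eval_sub, eval_pow, eval_X, eval_one, ← pow_mul, mul_comm, pow_mul, ← hα,
    pow_orderOf_eq_one, one_pow, sub_self]

theorem eval_pow_eq_zero_of_X_pow_sub_one_dvd (hα : orderOf α = n) {p : R[X]}
    (hp : X ^ n - 1 ∣ p) (i : ℕ) : p.eval (α ^ i) = 0 := by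
  obtain ⟨q, rfl⟩ := hp
  rw [eval_mul, (isRoot_X_pow_sub_one_of_orderOf_eq hα i).eq_zero, zero_mul]

variable [IsDomain R]

theorem X_pow_sub_one_dvd_of_eval_pow_eq_zero (hα : orderOf α = n) (hn : 0 < n) {p : R[X]}
    (hp : ∀ i : Fin n, p.eval (α ^ (i : ℕ)) = 0) : X ^ n - 1 ∣ p := by
  have hmonic : (X ^ n - 1 : R[X]).Monic := by simpa using monic_X_pow_sub_C (1 : R) hn.ne'
  rw [← modByMonic_eq_zero_iff_dvd hmonic]
  refine eq_zero_of_degree_lt_of_eval_index_eq_zero univ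
    (injective_fin_pow_of_orderOf_eq hα).injOn ?_ fun i _ => ?_
  · simpa [degree_X_pow_sub_one hn] using degree_modByMonic_lt p hmonic
  · rw [← hp i]
    exact eval₂_modByMonic_eq_self_of_root (isRoot_X_pow_sub_one_of_orderOf_eq hα i)

theorem mul_eq_of_X_pow_sub_one_dvd_of_degree_sub_lt (hα : orderOf α = n) {l f q : R[X]}
    (s : Finset (Fin n)) (hf : ∀ i ∈ s, f.eval (α ^ (i : ℕ)) = 0) (hq : X ^ n - 1 ∣ q)
    (hdeg : (l * f - q).degree < #s) : l * f = q :=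
  eq_of_degree_sub_lt_of_eval_index_eq s (injective_fin_pow_of_orderOf_eq hα).injOn hdeg
    fun i hi => by rw [eval_mul, hf i hi, mul_zero, eval_pow_eq_zero_of_X_pow_sub_one_dvd hα hq]

theorem eq_of_X_pow_sub_one_dvd_sub (hn : 0 < n) {p q : R[X]} (h : X ^ n - 1 ∣ p - q)
    (hp : p.degree < n) (hq : q.degree < n) : p = q :=
  sub_eq_zero.1 <| eq_zero_of_dvd_of_degree_lt h <| by
    rw [degree_X_pow_sub_one hn]
    exact (degree_sub_le _ _).trans_lt (max_lt hp hq)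

theorem X_pow_sub_one_dvd_mul_of_dvd_mul_add (hα : orderOf α = n) {l f h g : R[X]}
    {k : ℕ} (s : Finset (Fin n)) (hf : ∀ i ∈ s, f.eval (α ^ (i : ℕ)) = 0)
    (hfh : (f - h).degree < k) (hg : g.degree < k) (hl : l.natDegree + k ≤ #s)
    (hdvd : X ^ n - 1 ∣ l * (h + g)) : X ^ n - 1 ∣ l * f := by
  rwa [mul_eq_of_X_pow_sub_one_dvd_of_degree_sub_lt hα s hf hdvd]
  rw [show l * f - l * (h + g) = l * (f - h - g) by ring]
  exact (degree_mul_lt_of_natDegree_le le_rfl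
    ((degree_sub_le _ _).trans_lt (max_lt hfh hg))).trans_le (by exact_mod_cast hl)

end OrderOf

section ErrorLocator

variable {F : Type*} [Field F] [DecidableEq F] {n : ℕ}

noncomputable def errorLocator (α : F) (e : Fin n → F) : F[X] :=
  ∏ i ∈ univ.filter (fun i => e i ≠ 0), (X - C (α ^ (i : ℕ)))

theorem monic_errorLocator (α : F) (e : Fin n → F) : (errorLocator α e).Monic :=
  monic_prod_of_monic _ _ fun _ _ => monic_X_sub_C _

theorem natDegree_errorLocator (α : F) (e : Fin n → F) :
    (errorLocator α e).natDegree = #(univ.filter fun i => e i ≠ 0) := by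
  rw [errorLocator, natDegree_prod_of_monic _ _ fun _ _ => monic_X_sub_C _]
  simp only [natDegree_X_sub_C, sum_const, smul_eq_mul, mul_one]

theorem isRoot_errorLocator (α : F) {e : Fin n → F} {i : Fin n} (hi : e i ≠ 0) :
    (errorLocator α e).IsRoot (α ^ (i : ℕ)) := by
  simp only [IsRoot, errorLocator, eval_prod]
  exact prod_eq_zero (mem_filter.2 ⟨mem_univ i, hi⟩) (by simp)

theorem X_pow_sub_one_dvd_errorLocator_mul {α : F} (hα : orderOf α = n) (hn : 0 < n)
    {e : Fin n → F} {f : F[X]} (hf : ∀ i : Fin n, f.eval (α ^ (i : ℕ)) = e i) :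
    X ^ n - 1 ∣ errorLocator α e * f := by
  refine X_pow_sub_one_dvd_of_eval_pow_eq_zero hα hn fun i => ?_
  by_cases hi : e i = 0
  · rw [eval_mul, hf, hi, mul_zero]
  · rw [eval_mul, (isRoot_errorLocator α hi).eq_zero, zero_mul]

theorem natDegree_le_card_filter_ne_zero_of_minimal {α : F} (hα : orderOf α = n) (hn : 0 < n)
    {e : Fin n → F} {f h l : F[X]} {k : ℕ} (hf : ∀ i : Fin n, f.eval (α ^ (i : ℕ)) = e i)
    (hfh : (f - h).degree < k)
    (hl : ∀ μ : F[X], μ.Monic →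
      (∃ g : F[X], g.degree < k ∧ X ^ n - 1 ∣ μ * (h + g)) → l.degree ≤ μ.degree) :
    l.natDegree ≤ #(univ.filter fun i => e i ≠ 0) := by
  have hloc := hl _ (monic_errorLocator α e) ⟨_, hfh, by
    simpa using X_pow_sub_one_dvd_errorLocator_mul hα hn hf⟩
  rwa [degree_eq_natDegree (monic_errorLocator α e).ne_zero, natDegree_errorLocator,
    ← natDegree_le_iff_degree_le] at hloc

end ErrorLocator

theorem stmt_17_general {F : Type*} [Field F] [DecidableEq F] (α : F)
    (n k : ℕ) (hα : orderOf α = n)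
    (hk1 : 1 ≤ k) (hkn : k ≤ n)
    (u e : Fin n → F)
    (he : ∃ a : Polynomial F, a.degree < (k : WithBot ℕ) ∧
      ∀ i : Fin n, u i - e i = a.eval (α ^ (i : ℕ)))
    (t : ℕ) (htw : t = (Finset.univ.filter fun i => e i ≠ 0).card)
    (h2t : 2 * t ≤ n - k)
    (fu : Polynomial F)
    (hfu_deg : fu.degree < (n : WithBot ℕ))
    (hfu_val : ∀ i : Fin n, fu.eval (α ^ (i : ℕ)) = u i)
    (hu : Polynomial F)
    (hhu : ∀ m : ℕ, hu.coeff m = if m < k then 0 else fu.coeff m)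
    (lu : Polynomial F) (hlu_monic : lu.Monic)
    (hlu_mem : ∃ g : Polynomial F, g.degree < (k : WithBot ℕ) ∧
      (Polynomial.X ^ n - 1) ∣ lu * (hu + g))
    (hlu_min : ∀ μ : Polynomial F, μ.Monic →
      (∃ g : Polynomial F, g.degree < (k : WithBot ℕ) ∧
        (Polynomial.X ^ n - 1) ∣ μ * (hu + g)) →
      lu.degree ≤ μ.degree) :
    let du : ℕ := fu.natDegree
    let μ : Polynomial F := ∑ m ∈ Finset.Icc n (du + t),
      Polynomial.C ((lu * fu).coeff m) * Polynomial.X ^ (m - n)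
    let gc : Polynomial F := (lu * fu - (Polynomial.X ^ n - 1) * μ) /ₘ lu
    lu ∣ (lu * fu - (Polynomial.X ^ n - 1) * μ) ∧
    gc.degree < (k : WithBot ℕ) ∧
    ∀ i : Fin n, gc.eval (α ^ (i : ℕ)) = u i - e i := by
  intro du μ gc
  obtain ⟨a, ha_deg, ha_val⟩ := he
  have hn0 : 0 < n := by omega
  have hfe : ∀ i : Fin n, (fu - a).eval (α ^ (i : ℕ)) = e i := fun i => by
    rw [eval_sub, hfu_val, ← ha_val, sub_sub_cancel]
  have hlow : (fu - a - hu).degree < k := by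
    rw [sub_right_comm]
    exact (degree_sub_le _ _).trans_lt (max_lt (degree_sub_lt_of_coeff_eq_ite hhu) ha_deg)
  have hlu_deg : lu.natDegree ≤ t :=
    htw ▸ natDegree_le_card_filter_ne_zero_of_minimal hα hn0 hfe hlow hlu_min
  have hcard : #(univ.filter fun i => e i = 0) + t = n := by
    simpa [htw] using card_filter_add_card_filter_not (s := univ) fun i => e i = 0
  obtain ⟨g, hg_deg, hg_dvd⟩ := hlu_mem
  have hdvd : X ^ n - 1 ∣ lu * fu - lu * a := by
    rw [← mul_sub]
    exact X_pow_sub_one_dvd_mul_of_dvd_mul_add hα (univ.filter fun i => e i = 0)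
      (fun i hi => by rw [hfe, (mem_filter.1 hi).2]) hlow hg_deg (by omega) hg_dvd
  have hdun : du < n := by
    rcases eq_or_ne fu 0 with hfu | hfu
    · simp [du, hfu, hn0]
    · exact (natDegree_lt_iff_degree_lt hfu).2 hfu_deg
  have hQ : lu * fu - (X ^ n - 1) * μ = lu * a := by
    refine eq_of_X_pow_sub_one_dvd_sub hn0 ?_ (degree_sub_X_pow_sub_one_mul_sum_lt
      ((natDegree_mul_le_of_le hlu_deg le_rfl).trans_eq (add_comm _ _)) (by omega))
      ((degree_mul_lt_of_natDegree_le hlu_deg ha_deg).trans_le (by exact_mod_cast (by omega)))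
    rw [sub_right_comm]
    exact dvd_sub hdvd (dvd_mul_right _ _)
  have hgc : gc = a := by simp only [gc, hQ, mul_divByMonic_cancel_left a hlu_monic]
  exact ⟨⟨a, hQ⟩, hgc ▸ ha_deg, fun i => by rw [hgc, ha_val]⟩

/-- correctness of the decoding algorithm.  With `t ≤ (n-k)/2` the number
of errors, `λ_u` monic of minimal degree in `Λ`, `d_u = deg f_u`,
`ζ_m = (λ_u f_u).coeff m` and `μ = ζ_n + ζ_{n+1} x + … + ζ_{d_u+t} x^{d_u+t-n}`,
the polynomial `λ_u` divides `λ_u f_u - (x^n - 1) μ`, the quotient `g_c` has degree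
`< k`, and `(g_c(1), g_c(α), …, g_c(α^{n-1})) = u - e`. -/
theorem stmt_17 {F : Type*} [Field F] [Fintype F] [DecidableEq F] (α : F)
    (n k : ℕ) (hn : n = Fintype.card F - 1) (hα : orderOf α = n)
    (hk1 : 1 ≤ k) (hkn : k ≤ n)
    (u e : Fin n → F)
    (he : ∃ a : Polynomial F, a.degree < (k : WithBot ℕ) ∧
      ∀ i : Fin n, u i - e i = a.eval (α ^ (i : ℕ)))
    (hmin : ∀ e' : Fin n → F,
      (∃ a : Polynomial F, a.degree < (k : WithBot ℕ) ∧
        ∀ i : Fin n, u i - e' i = a.eval (α ^ (i : ℕ))) →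
      (Finset.univ.filter fun i => e i ≠ 0).card ≤
        (Finset.univ.filter fun i => e' i ≠ 0).card)
    (t : ℕ) (htw : t = (Finset.univ.filter fun i => e i ≠ 0).card)
    (h2t : 2 * t ≤ n - k)
    (fu : Polynomial F)
    (hfu_deg : fu.degree < (n : WithBot ℕ))
    (hfu_val : ∀ i : Fin n, fu.eval (α ^ (i : ℕ)) = u i)
    (hu : Polynomial F)
    (hhu : ∀ m : ℕ, hu.coeff m = if m < k then 0 else fu.coeff m)
    (lu : Polynomial F) (hlu_monic : lu.Monic)
    (hlu_mem : ∃ g : Polynomial F, g.degree < (k : WithBot ℕ) ∧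
      (Polynomial.X ^ n - 1) ∣ lu * (hu + g))
    (hlu_min : ∀ μ : Polynomial F, μ.Monic →
      (∃ g : Polynomial F, g.degree < (k : WithBot ℕ) ∧
        (Polynomial.X ^ n - 1) ∣ μ * (hu + g)) →
      lu.degree ≤ μ.degree) :
    let du : ℕ := fu.natDegree
    let μ : Polynomial F := ∑ m ∈ Finset.Icc n (du + t),
      Polynomial.C ((lu * fu).coeff m) * Polynomial.X ^ (m - n)
    let gc : Polynomial F := (lu * fu - (Polynomial.X ^ n - 1) * μ) /ₘ lu
    lu ∣ (lu * fu - (Polynomial.X ^ n - 1) * μ) ∧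
    gc.degree < (k : WithBot ℕ) ∧
    ∀ i : Fin n, gc.eval (α ^ (i : ℕ)) = u i - e i :=
  stmt_17_general α n k hα hk1 hkn u e he t htw h2t fu hfu_deg hfu_val hu hhu lu hlu_monic hlu_mem
    hlu_min
end
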